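/- arXiv:1712.08956 — 5 statements merged into one kernel-verified Lean document; each statement's English description precedes it below -/
import Mathlib

section
/- Let γ ∈ (0,1), T > 0, and let u be continuous on [0,T) and continuously differentiable on (0,T) with u′ integrable near 0. Let A ∈ ℝ and t₁ ∈ (0,T). If u(t) ≤ A for all t ∈ [0,t₁], and the pointwise Caputo derivative satisfies D_c^γ u(t) ≤ 0 for all t ∈ (t₁,T), then u(t) ≤ A for all t ∈ [0,T). -/
open MeasureTheory Set Filter

lemma hasDerivAt_pow_sub (γ t₂ s : ℝ) (hs : s < t₂) :
    HasDerivAt (fun x : ℝ => (t₂ - x) ^ (-γ)) (γ * (t₂ - s) ^ (-γ - 1)) s := by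
  have hpos : (0:ℝ) < t₂ - s := by linarith
  have h1 : HasDerivAt (fun x : ℝ => x ^ (-γ)) (-γ * (t₂ - s) ^ (-γ - 1)) (t₂ - s) :=
    Real.hasDerivAt_rpow_const (Or.inl (ne_of_gt hpos))
  have h2 : HasDerivAt (fun x : ℝ => t₂ - x) (-1) s := (hasDerivAt_id s).const_sub t₂
  have := h1.comp s h2
  simpa [Function.comp_def] using this.neg.neg

lemma integrable_kernel_mul_deriv (γ T t₂ : ℝ) (hγ : γ ∈ Set.Ioo (0:ℝ) 1)
    (u : ℝ → ℝ)
    (hu_deriv_cont : ContinuousOn (deriv u) (Set.Ioo 0 T))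
    (hu_deriv_int : ∀ t ∈ Set.Ioo 0 T, IntervalIntegrable (deriv u) volume 0 t)
    (ht₂ : t₂ ∈ Set.Ioo 0 T) :
    IntervalIntegrable (fun s => (t₂ - s) ^ (-γ) * deriv u s) volume 0 t₂ := by
  obtain ⟨ht0, htT⟩ := ht₂
  have hc : (0:ℝ) < t₂ / 2 := by linarith
  have h1 : IntervalIntegrable (fun s => (t₂ - s) ^ (-γ) * deriv u s) volume 0 (t₂/2) := by
    have hint := hu_deriv_int (t₂/2) ⟨hc, by linarith⟩
    have hg : ContinuousOn (fun s : ℝ => (t₂ - s) ^ (-γ)) (Set.uIcc 0 (t₂/2)) := by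
      apply ContinuousOn.rpow_const
      · exact (continuous_const.sub continuous_id).continuousOn
      · intro x hx
        rw [Set.uIcc_of_le (by linarith)] at hx
        refine Or.inl ?_
        have : x ≤ t₂/2 := hx.2
        have : 0 < t₂ - x := by linarith
        exact ne_of_gt this
    exact hint.continuousOn_mul hg
  have h2 : IntervalIntegrable (fun s => (t₂ - s) ^ (-γ) * deriv u s) volume (t₂/2) t₂ := by
    have hk : IntervalIntegrable (fun s : ℝ => (t₂ - s) ^ (-γ)) volume (t₂/2) t₂ := by
      have := (intervalIntegral.intervalIntegrable_rpow' (a := t₂ - t₂/2) (b := t₂ - t₂)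
        (r := -γ) (by linarith [hγ.2])).comp_sub_left t₂
      simpa using this
    have hg : ContinuousOn (deriv u) (Set.uIcc (t₂/2) t₂) := by
      apply hu_deriv_cont.mono
      rw [Set.uIcc_of_le (by linarith)]
      intro x hx
      exact ⟨by linarith [hx.1], by linarith [hx.2]⟩
    exact hk.mul_continuousOn hg
  exact h1.trans h2

lemma key_pos (γ T t₂ : ℝ) (hγ : γ ∈ Set.Ioo (0:ℝ) 1)
    (u : ℝ → ℝ)
    (hu_cont : ContinuousOn u (Set.Ico 0 T))
    (hu_diff : ∀ t ∈ Set.Ioo 0 T, DifferentiableAt ℝ u t)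
    (hu_deriv_cont : ContinuousOn (deriv u) (Set.Ioo 0 T))
    (hu_deriv_int : ∀ t ∈ Set.Ioo 0 T, IntervalIntegrable (deriv u) volume 0 t)
    (ht₂ : t₂ ∈ Set.Ioo 0 T)
    (hmax : ∀ s ∈ Set.Icc 0 t₂, u s ≤ u t₂)
    (h0 : u 0 < u t₂) :
    0 < ∫ s in (0:ℝ)..t₂, (t₂ - s) ^ (-γ) * deriv u s := by
  obtain ⟨hγ0, hγ1⟩ := hγ
  obtain ⟨ht0, htT⟩ := ht₂
  set M := u t₂ with hM
  have hf_int := integrable_kernel_mul_deriv γ T t₂ ⟨hγ0, hγ1⟩ u hu_deriv_cont hu_deriv_int ⟨ht0, htT⟩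
  -- Step 1: per-x lower bound for the truncated integral
  have key : ∀ x ∈ Set.Ico (0:ℝ) t₂,
      (t₂ - x) ^ (-γ) * (u x - M) + t₂ ^ (-γ) * (M - u 0)
        ≤ ∫ s in (0:ℝ)..x, (t₂ - s) ^ (-γ) * deriv u s := by
    intro x hx
    obtain ⟨hx0, hxt⟩ := hx
    have hIcc_sub : Set.Icc (0:ℝ) x ⊆ Set.Ico 0 T := fun y hy => ⟨hy.1, by linarith [hy.2]⟩
    have hucx : ContinuousOn u (Set.Icc 0 x) := hu_cont.mono hIcc_sub
    have hker_ne : ∀ y ∈ Set.Icc (0:ℝ) x, t₂ - y ≠ 0 := by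
      intro y hy
      have h' : 0 < t₂ - y := by linarith [hy.2]
      exact ne_of_gt h'
    have hker_cont : ContinuousOn (fun s : ℝ => (t₂ - s) ^ (-γ)) (Set.Icc 0 x) :=
      ((continuous_const.sub continuous_id).continuousOn).rpow_const
        (fun y hy => Or.inl (hker_ne y hy))
    have hker1_cont : ContinuousOn (fun s : ℝ => γ * (t₂ - s) ^ (-γ - 1) * u s) (Set.Icc 0 x) := by
      apply ContinuousOn.mul _ hucx
      exact continuousOn_const.mul
        (((continuous_const.sub continuous_id).continuousOn).rpow_const
          (fun y hy => Or.inl (hker_ne y hy)))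
    have h_int1 : IntervalIntegrable (fun s => γ * (t₂ - s) ^ (-γ - 1) * u s) volume 0 x := by
      apply ContinuousOn.intervalIntegrable
      rwa [Set.uIcc_of_le hx0]
    have h_intf : IntervalIntegrable (fun s => (t₂ - s) ^ (-γ) * deriv u s) volume 0 x :=
      hf_int.mono_set (by
        rw [Set.uIcc_of_le hx0, Set.uIcc_of_le (le_of_lt ht0)]
        exact Set.Icc_subset_Icc le_rfl (le_of_lt hxt))
    have hw : ∫ s in (0:ℝ)..x,
        (γ * (t₂ - s) ^ (-γ - 1) * u s + (t₂ - s) ^ (-γ) * deriv u s)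
        = (t₂ - x) ^ (-γ) * u x - t₂ ^ (-γ) * u 0 := by
      have hcont : ContinuousOn (fun s : ℝ => (t₂ - s) ^ (-γ) * u s) (Set.Icc 0 x) :=
        hker_cont.mul hucx
      have hder : ∀ y ∈ Set.Ioo (0:ℝ) x,
          HasDerivWithinAt (fun s : ℝ => (t₂ - s) ^ (-γ) * u s)
            (γ * (t₂ - y) ^ (-γ - 1) * u y + (t₂ - y) ^ (-γ) * deriv u y) (Set.Ioi y) y := by
        intro y hy
        have hdy : HasDerivAt u (deriv u y) y :=
          (hu_diff y ⟨hy.1, by linarith [hy.2]⟩).hasDerivAt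
        exact ((hasDerivAt_pow_sub γ t₂ y (by linarith [hy.2])).mul hdy).hasDerivWithinAt
      have := intervalIntegral.integral_eq_sub_of_hasDeriv_right_of_le hx0 hcont hder
        (h_int1.add h_intf)
      simpa using this
    rw [intervalIntegral.integral_add h_int1 h_intf] at hw
    have h_int1' : IntervalIntegrable (fun s => γ * (t₂ - s) ^ (-γ - 1) * M) volume 0 x := by
      apply ContinuousOn.intervalIntegrable
      rw [Set.uIcc_of_le hx0]
      exact (continuousOn_const.mul
        (((continuous_const.sub continuous_id).continuousOn).rpow_const
          (fun y hy => Or.inl (hker_ne y hy)))).mul continuousOn_const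
    have hbound : (∫ s in (0:ℝ)..x, γ * (t₂ - s) ^ (-γ - 1) * u s)
        ≤ ∫ s in (0:ℝ)..x, γ * (t₂ - s) ^ (-γ - 1) * M := by
      apply intervalIntegral.integral_mono_on hx0 h_int1 h_int1'
      intro y hy
      have hnn : 0 ≤ γ * (t₂ - y) ^ (-γ - 1) := by
        apply mul_nonneg (le_of_lt hγ0)
        apply Real.rpow_nonneg
        linarith [hy.2]
      exact mul_le_mul_of_nonneg_left (hmax y ⟨hy.1, by linarith [hy.2]⟩) hnn
    have hcomp : (∫ s in (0:ℝ)..x, γ * (t₂ - s) ^ (-γ - 1) * M)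
        = ((t₂ - x) ^ (-γ) - t₂ ^ (-γ)) * M := by
      have hkint : IntervalIntegrable (fun s => γ * (t₂ - s) ^ (-γ - 1)) volume 0 x := by
        apply ContinuousOn.intervalIntegrable
        rw [Set.uIcc_of_le hx0]
        exact continuousOn_const.mul
          (((continuous_const.sub continuous_id).continuousOn).rpow_const
            (fun y hy => Or.inl (hker_ne y hy)))
      have hint : (∫ s in (0:ℝ)..x, γ * (t₂ - s) ^ (-γ - 1))
          = (t₂ - x) ^ (-γ) - t₂ ^ (-γ) := by
        have := intervalIntegral.integral_eq_sub_of_hasDerivAt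
          (f := fun s : ℝ => (t₂ - s) ^ (-γ))
          (f' := fun s : ℝ => γ * (t₂ - s) ^ (-γ - 1)) (a := 0) (b := x)
          (fun y hy => by
            rw [Set.uIcc_of_le hx0] at hy
            exact hasDerivAt_pow_sub γ t₂ y (by linarith [hy.2]))
          hkint
        simpa using this
      rw [← hint, ← intervalIntegral.integral_mul_const]
    rw [hcomp] at hbound
    have expand : (t₂ - x) ^ (-γ) * (u x - M) + t₂ ^ (-γ) * (M - u 0)
        = ((t₂ - x) ^ (-γ) * u x - t₂ ^ (-γ) * u 0) - ((t₂ - x) ^ (-γ) - t₂ ^ (-γ)) * M := by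
      ring
    rw [expand]
    linarith
  -- Step 2: pass to the limit x → t₂⁻
  have hL : Tendsto (fun x => ∫ s in (0:ℝ)..x, (t₂ - s) ^ (-γ) * deriv u s)
      (nhdsWithin t₂ (Set.Iio t₂)) (nhds (∫ s in (0:ℝ)..t₂, (t₂ - s) ^ (-γ) * deriv u s)) := by
    have hIOn : IntegrableOn (fun s => (t₂ - s) ^ (-γ) * deriv u s) (Set.uIcc 0 t₂) volume := by
      rw [Set.uIcc_of_le (le_of_lt ht0)]
      exact (intervalIntegrable_iff_integrableOn_Icc_of_le (le_of_lt ht0)).mp hf_int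
    have hcont := intervalIntegral.continuousOn_primitive_interval hIOn
    have h1 : Tendsto (fun x => ∫ s in (0:ℝ)..x, (t₂ - s) ^ (-γ) * deriv u s)
        (nhdsWithin t₂ (Set.uIcc 0 t₂)) (nhds (∫ s in (0:ℝ)..t₂, (t₂ - s) ^ (-γ) * deriv u s)) :=
      hcont t₂ (by rw [Set.uIcc_of_le (le_of_lt ht0)]; exact ⟨le_of_lt ht0, le_rfl⟩)
    rw [← nhdsWithin_Ico_eq_nhdsLT ht0]
    apply h1.mono_left
    apply nhdsWithin_mono
    rw [Set.uIcc_of_le (le_of_lt ht0)]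
    exact Set.Ico_subset_Icc_self
  have hd : HasDerivAt u (deriv u t₂) t₂ := (hu_diff t₂ ⟨ht0, htT⟩).hasDerivAt
  have hslope : Tendsto (slope u t₂) (nhdsWithin t₂ (Set.Iio t₂)) (nhds (deriv u t₂)) :=
    (hasDerivAt_iff_tendsto_slope.mp hd).mono_left
      (nhdsWithin_mono _ (fun y hy => ne_of_lt hy))
  have hpow : Tendsto (fun x => (t₂ - x) ^ ((1:ℝ) - γ)) (nhdsWithin t₂ (Set.Iio t₂)) (nhds 0) := by
    have g1 : Tendsto (fun x : ℝ => t₂ - x) (nhdsWithin t₂ (Set.Iio t₂)) (nhdsWithin 0 (Set.Ioi 0)) := by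
      apply tendsto_nhdsWithin_of_tendsto_nhds_of_eventually_within
      · have : Tendsto (fun x : ℝ => t₂ - x) (nhds t₂) (nhds (t₂ - t₂)) :=
          (continuous_const.sub continuous_id).tendsto t₂
        simpa using this.mono_left nhdsWithin_le_nhds
      · filter_upwards [self_mem_nhdsWithin] with y hy
        exact Set.mem_Ioi.mpr (sub_pos.mpr (Set.mem_Iio.mp hy))
    have g2 : Tendsto (fun y : ℝ => y ^ ((1:ℝ) - γ)) (nhdsWithin 0 (Set.Ioi 0)) (nhds 0) := by
      have hc := (Real.continuousAt_rpow_const 0 (1 - γ) (Or.inr (by linarith))).tendsto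
      rw [Real.zero_rpow (by linarith : (1:ℝ) - γ ≠ 0)] at hc
      exact hc.mono_left nhdsWithin_le_nhds
    exact g2.comp g1
  have heq : (fun x => (t₂ - x) ^ (-γ) * (u x - M))
      =ᶠ[nhdsWithin t₂ (Set.Iio t₂)] (fun x => -(slope u t₂ x * (t₂ - x) ^ ((1:ℝ) - γ))) := by
    filter_upwards [self_mem_nhdsWithin] with x hx
    have hxp : (0:ℝ) < t₂ - x := sub_pos.mpr (Set.mem_Iio.mp hx)
    have hne : x - t₂ ≠ 0 := sub_ne_zero.mpr (ne_of_lt (Set.mem_Iio.mp hx))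
    have hpow1 : (t₂ - x) ^ ((1:ℝ) - γ) = (t₂ - x) * (t₂ - x) ^ (-γ) := by
      rw [show (1:ℝ) - γ = 1 + (-γ) by ring, Real.rpow_add hxp, Real.rpow_one]
    rw [hpow1, slope_def_field]
    field_simp
    ring
  have hR : Tendsto (fun x => (t₂ - x) ^ (-γ) * (u x - M) + t₂ ^ (-γ) * (M - u 0))
      (nhdsWithin t₂ (Set.Iio t₂)) (nhds (t₂ ^ (-γ) * (M - u 0))) := by
    have h1 : Tendsto (fun x => (t₂ - x) ^ (-γ) * (u x - M)) (nhdsWithin t₂ (Set.Iio t₂)) (nhds 0) := by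
      have := (hslope.mul hpow).neg
      rw [mul_zero, neg_zero] at this
      exact Tendsto.congr' heq.symm this
    have := h1.add (tendsto_const_nhds (x := t₂ ^ (-γ) * (M - u 0)))
    simpa using this
  have hfinal : t₂ ^ (-γ) * (M - u 0) ≤ ∫ s in (0:ℝ)..t₂, (t₂ - s) ^ (-γ) * deriv u s := by
    apply le_of_tendsto_of_tendsto hR hL
    filter_upwards [Ioo_mem_nhdsLT_of_mem (Set.mem_Ioc.mpr ⟨ht0, le_rfl⟩)] with x hx
    exact key x ⟨le_of_lt hx.1, hx.2⟩
  have hpos : 0 < t₂ ^ (-γ) * (M - u 0) :=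
    mul_pos (Real.rpow_pos_of_pos ht0 _) (by linarith)
  linarith

/-- The pointwise Caputo derivative of order `γ`:
`D_c^γ u (t) = (1/Γ(1-γ)) ∫₀ᵗ (t-s)^(-γ) u'(s) ds`. -/
noncomputable def caputoDeriv (γ : ℝ) (u : ℝ → ℝ) (t : ℝ) : ℝ :=
  (1 / Real.Gamma (1 - γ)) * ∫ s in (0:ℝ)..t, (t - s) ^ (-γ) * deriv u s

/-- If `u ≤ A` on `[0,t₁]` and `D_c^γ u ≤ 0` on `(t₁,T)`,
then `u ≤ A` on the whole of `[0,T)`. -/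
theorem caputo_comparison_below_level
    (γ T : ℝ) (hγ : γ ∈ Set.Ioo (0:ℝ) 1) (hT : 0 < T)
    (u : ℝ → ℝ)
    (hu_cont : ContinuousOn u (Set.Ico 0 T))
    (hu_diff : ∀ t ∈ Set.Ioo 0 T, DifferentiableAt ℝ u t)
    (hu_deriv_cont : ContinuousOn (deriv u) (Set.Ioo 0 T))
    (hu_deriv_int : ∀ t ∈ Set.Ioo 0 T, IntervalIntegrable (deriv u) volume 0 t)
    (A t₁ : ℝ) (ht₁ : t₁ ∈ Set.Ioo 0 T)
    (hbelow : ∀ t ∈ Set.Icc 0 t₁, u t ≤ A)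
    (hcap : ∀ t ∈ Set.Ioo t₁ T, caputoDeriv γ u t ≤ 0) :
    ∀ t ∈ Set.Ico 0 T, u t ≤ A := by
  by_contra hcon
  push_neg at hcon
  obtain ⟨s₀, hs₀, hAs₀⟩ := hcon
  obtain ⟨hs₀0, hs₀T⟩ := hs₀
  -- u attains a maximum on [0, s₀]
  have hsub : Set.Icc (0:ℝ) s₀ ⊆ Set.Ico 0 T := fun y hy => ⟨hy.1, lt_of_le_of_lt hy.2 hs₀T⟩
  obtain ⟨t₂, ht₂mem, ht₂max⟩ := isCompact_Icc.exists_isMaxOn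
    (Set.nonempty_Icc.mpr hs₀0) (hu_cont.mono hsub)
  have hmaxf : ∀ y ∈ Set.Icc (0:ℝ) s₀, u y ≤ u t₂ := fun y hy => ht₂max hy
  have hAt₂ : A < u t₂ := lt_of_lt_of_le hAs₀ (hmaxf s₀ ⟨hs₀0, le_rfl⟩)
  have ht₂1 : t₁ < t₂ := by
    by_contra h
    push_neg at h
    exact absurd (hbelow t₂ ⟨ht₂mem.1, h⟩) (not_le.mpr hAt₂)
  have ht₂Ioo : t₂ ∈ Set.Ioo (0:ℝ) T :=
    ⟨lt_trans ht₁.1 ht₂1, lt_of_le_of_lt ht₂mem.2 hs₀T⟩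
  have h0 : u 0 < u t₂ := lt_of_le_of_lt (hbelow 0 ⟨le_rfl, le_of_lt ht₁.1⟩) hAt₂
  have hmax' : ∀ s ∈ Set.Icc (0:ℝ) t₂, u s ≤ u t₂ := fun s hs =>
    hmaxf s ⟨hs.1, le_trans hs.2 ht₂mem.2⟩
  have hposI := key_pos γ T t₂ hγ u hu_cont hu_diff hu_deriv_cont hu_deriv_int ht₂Ioo hmax' h0
  have hΓ : 0 < Real.Gamma (1 - γ) := Real.Gamma_pos_of_pos (by linarith [hγ.2])
  have : 0 < caputoDeriv γ u t₂ := by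
    unfold caputoDeriv
    positivity
  exact absurd (hcap t₂ ⟨ht₂1, ht₂Ioo.2⟩) (not_le.mpr this)
end

section
/- Let γ ∈ (0,1), T > 0, t₁ ∈ (0,T). Let u₁, u₂ be continuous on [0,T) and continuously differentiable on (0,T), with pointwise Caputo derivatives locally integrable on [0,T). Assume u₁(t) ≤ u₂(t) for all t ∈ [0,t₁]. Let f : [t₁,T) × ℝ → ℝ be such that f(t,·) is non-increasing for each t ∈ (t₁,T) and t ↦ f(t,uᵢ(t)) is locally integrable on [t₁,T) for i = 1,2. If D_c^γ u₁(t) − D_c^γ u₂(t) ≤ f(t, u₁(t)) − f(t, u₂(t)) for a.e. t ∈ (t₁,T), then u₁(t) ≤ u₂(t) for all t ∈ [0,T). -/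
open MeasureTheory Set Filter

open Topology in
lemma kernel_integrable {γ T t : ℝ} (hγ : γ ∈ Set.Ioo (0:ℝ) 1) (ht : t ∈ Set.Ioo 0 T)
    (v : ℝ → ℝ) (hv : ContinuousOn v (Set.Ioo 0 T))
    (hint : IntervalIntegrable v volume 0 t) :
    IntervalIntegrable (fun s => (t - s) ^ (-γ) * v s) volume 0 t := by
  obtain ⟨ht0, htT⟩ := ht
  obtain ⟨hγ0, hγ1⟩ := hγ
  have ht2 : 0 < t / 2 := by linarith
  have hmeas : Measurable (fun s : ℝ => (t - s) ^ (-γ)) :=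
    (measurable_const.sub measurable_id).pow_const _
  have hvm : AEStronglyMeasurable v (volume.restrict (Set.Ioc 0 t)) := by
    exact hint.1.aestronglyMeasurable
  have h1 : IntervalIntegrable (fun s => (t - s) ^ (-γ) * v s) volume 0 (t / 2) := by
    have hsub : Set.uIcc 0 (t/2) ⊆ Set.uIcc 0 t := by
      rw [Set.uIcc_of_le ht2.le, Set.uIcc_of_le ht0.le]
      exact Set.Icc_subset_Icc le_rfl (by linarith)
    have hg : IntervalIntegrable (fun s => (t / 2) ^ (-γ) * v s) volume 0 (t / 2) :=
      (hint.mono_set hsub).const_mul _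
    have hsub2 : Set.uIoc 0 (t/2) ⊆ Set.Ioc 0 t := by
      rw [uIoc_of_le ht2.le]; exact Set.Ioc_subset_Ioc le_rfl (by linarith)
    apply hg.mono_fun
    · exact (hmeas.aestronglyMeasurable.mono_measure
        (Measure.restrict_mono hsub2 le_rfl)).mul
        (hvm.mono_measure (Measure.restrict_mono hsub2 le_rfl))
    · filter_upwards [ae_restrict_mem measurableSet_uIoc] with s hs
      rw [uIoc_of_le ht2.le] at hs
      simp only [norm_mul, Real.norm_eq_abs]
      rw [abs_of_nonneg (Real.rpow_nonneg (by linarith [hs.2] : (0:ℝ) ≤ t - s) _),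
        abs_of_nonneg (Real.rpow_nonneg ht2.le _)]
      refine mul_le_mul_of_nonneg_right ?_ (abs_nonneg _)
      exact Real.rpow_le_rpow_of_nonpos (by linarith [hs.2]) (by linarith [hs.2]) (by linarith)
  have h2 : IntervalIntegrable (fun s => (t - s) ^ (-γ) * v s) volume (t / 2) t := by
    have hsub : Set.Icc (t/2) t ⊆ Set.Ioo 0 T := fun x hx => ⟨by linarith [hx.1], by linarith [hx.2]⟩
    obtain ⟨M, hM⟩ := (isCompact_Icc (a := t/2) (b := t)).exists_bound_of_continuousOn (hv.mono hsub)
    have hM0 : 0 ≤ M := le_trans (norm_nonneg _) (hM t ⟨by linarith, le_rfl⟩)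
    have hker : IntervalIntegrable (fun s : ℝ => (t - s) ^ (-γ)) volume (t/2) t := by
      have h := (intervalIntegral.intervalIntegrable_rpow' (a := 0) (b := t/2)
        (by linarith : (-1:ℝ) < -γ)).comp_sub_left t
      simpa [sub_half] using h.symm
    have hsub2 : Set.uIoc (t/2) t ⊆ Set.Ioc 0 t := by
      rw [uIoc_of_le (by linarith : t/2 ≤ t)]; exact Set.Ioc_subset_Ioc (by linarith) le_rfl
    apply (hker.const_mul M).mono_fun
    · exact (hmeas.aestronglyMeasurable.mono_measure (Measure.restrict_mono hsub2 le_rfl)).mul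
        (hvm.mono_measure (Measure.restrict_mono hsub2 le_rfl))
    · filter_upwards [ae_restrict_mem measurableSet_uIoc] with s hs
      rw [uIoc_of_le (by linarith : t/2 ≤ t)] at hs
      have hk0 : (0:ℝ) ≤ (t - s) ^ (-γ) := Real.rpow_nonneg (by linarith [hs.2]) _
      simp only [norm_mul, Real.norm_eq_abs]
      rw [abs_of_nonneg hk0, mul_comm (|M|) _]
      refine mul_le_mul_of_nonneg_left ?_ hk0
      exact le_trans ((Real.norm_eq_abs _) ▸ hM s ⟨hs.1.le, hs.2⟩) (le_abs_self M)
  exact h1.trans h2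


open Topology in
lemma key_lower_bound {γ T t : ℝ} (hγ : γ ∈ Set.Ioo (0:ℝ) 1) (ht : t ∈ Set.Ioo 0 T)
    (w : ℝ → ℝ) (hw : ContinuousOn w (Set.Icc 0 t))
    (hd : ∀ s ∈ Set.Ioo 0 T, HasDerivAt w (deriv w s) s)
    (hd' : ContinuousOn (deriv w) (Set.Ioo 0 T))
    (hint : IntervalIntegrable (deriv w) volume 0 t)
    (hmax : ∀ s ∈ Set.Icc 0 t, w s ≤ w t) :
    t ^ (-γ) * (w t - w 0) ≤ ∫ s in (0:ℝ)..t, (t - s) ^ (-γ) * deriv w s := by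
  obtain ⟨ht0, htT⟩ := ht
  obtain ⟨hγ0, hγ1⟩ := hγ
  set k : ℝ → ℝ := fun s => (t - s) ^ (-γ) with hk
  set W : ℝ → ℝ := fun s => w s - w t with hW
  have kint : IntervalIntegrable (fun s => k s * deriv w s) volume 0 t :=
    kernel_integrable ⟨hγ0, hγ1⟩ ⟨ht0, htT⟩ _ hd' hint
  -- Step B : integration by parts inequality on [ε, b]
  have stepB : ∀ ε b : ℝ, 0 < ε → ε ≤ b → b < t →
      k b * W b - k ε * W ε ≤ ∫ s in ε..b, k s * deriv w s := by
    intro ε b hε hεb hbt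
    have huIcc : Set.uIcc ε b = Set.Icc ε b := Set.uIcc_of_le hεb
    have hkderiv : ∀ x ∈ Set.uIcc ε b, HasDerivAt k (γ * (t - x) ^ (-γ - 1)) x := by
      intro x hx
      rw [huIcc] at hx
      have htx : 0 < t - x := by linarith [hx.2]
      have h1 : HasDerivAt (fun s : ℝ => t - s) (-1) x := by
        simpa using (hasDerivAt_id x).const_sub t
      have := h1.rpow_const (p := -γ) (Or.inl htx.ne')
      simpa [mul_comm, mul_assoc, mul_left_comm] using this
    have hWderiv : ∀ x ∈ Set.uIcc ε b, HasDerivAt W (deriv w x) x := by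
      intro x hx
      rw [huIcc] at hx
      exact (hd x ⟨lt_of_lt_of_le hε hx.1, by linarith [hx.2]⟩).sub_const _
    have hk'int : IntervalIntegrable (fun x => γ * (t - x) ^ (-γ - 1)) volume ε b := by
      apply ContinuousOn.intervalIntegrable
      rw [huIcc]
      refine continuousOn_const.mul (ContinuousOn.rpow_const ?_ ?_)
      · exact continuousOn_const.sub continuousOn_id
      · intro x hx
        exact Or.inl (by simp; intro h; nlinarith [hx.2])
    have hvint : IntervalIntegrable (deriv w) volume ε b := by
      apply ContinuousOn.intervalIntegrable
      rw [huIcc]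
      exact hd'.mono (fun x hx => ⟨lt_of_lt_of_le hε hx.1, by linarith [hx.2]⟩)
    have ibp := intervalIntegral.integral_mul_deriv_eq_deriv_mul hkderiv hWderiv hk'int hvint
    -- ibp : ∫ x in ε..b, k x * deriv w x = k b * W b - k ε * W ε - ∫ x in ε..b, (γ * (t-x)^(-γ-1)) * W x
    have hneg : ∫ x in ε..b, (γ * (t - x) ^ (-γ - 1)) * W x ≤ 0 := by
      have hnn : (0:ℝ) ≤ ∫ x in ε..b, -((γ * (t - x) ^ (-γ - 1)) * W x) := by
        apply intervalIntegral.integral_nonneg hεb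
        intro x hx
        have hWx : W x ≤ 0 := by
          have := hmax x ⟨by linarith [hx.1], by linarith [hx.2]⟩
          simp only [hW]; linarith
        have hgx : 0 ≤ γ * (t - x) ^ (-γ - 1) :=
          mul_nonneg hγ0.le (Real.rpow_nonneg (by linarith [hx.2]) _)
        simpa using mul_nonneg hgx (neg_nonneg.mpr hWx)
      rw [intervalIntegral.integral_neg] at hnn
      linarith
    rw [ibp]
    linarith
  -- Step C : let ε → 0⁺
  have stepC : ∀ b : ℝ, 0 < b → b < t →
      k b * W b + t ^ (-γ) * (w t - w 0) ≤ ∫ s in (0:ℝ)..b, k s * deriv w s := by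
    intro b hb hbt
    have kintb : IntervalIntegrable (fun s => k s * deriv w s) volume 0 b :=
      kint.mono_set (by rw [Set.uIcc_of_le hb.le, Set.uIcc_of_le ht0.le]
                        exact Set.Icc_subset_Icc le_rfl hbt.le)
    have kIccb : IntegrableOn (fun s => k s * deriv w s) (Set.uIcc 0 b) volume := by
      rw [Set.uIcc_of_le hb.le, integrableOn_Icc_iff_integrableOn_Ioc]
      exact (intervalIntegrable_iff_integrableOn_Ioc_of_le hb.le).mp kintb
    have hcont := intervalIntegral.continuousOn_primitive_interval_left (μ := volume) kIccb
    have tendsto1 : Tendsto (fun ε => ∫ s in ε..b, k s * deriv w s) (𝓝[>] (0:ℝ))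
        (𝓝 (∫ s in (0:ℝ)..b, k s * deriv w s)) := by
      have h0 := (hcont 0 (by rw [Set.uIcc_of_le hb.le]; exact ⟨le_rfl, hb.le⟩)).tendsto
      rw [← nhdsWithin_Ioc_eq_nhdsGT hb]
      exact h0.mono_left (nhdsWithin_mono _ (by rw [Set.uIcc_of_le hb.le]; exact Set.Ioc_subset_Icc_self))
    have tendsto2 : Tendsto (fun ε => k ε * W ε) (𝓝[>] (0:ℝ)) (𝓝 (k 0 * W 0)) := by
      have hkc : ContinuousAt k 0 := by
        apply ContinuousAt.rpow_const
        · exact (continuous_const.sub continuous_id).continuousAt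
        · simp; exact Or.inl ht0.ne'
      have hWc : Tendsto W (𝓝[>] (0:ℝ)) (𝓝 (W 0)) := by
        have := ((hw.sub (continuousOn_const (c := w t))) 0 ⟨le_rfl, ht0.le⟩).tendsto
        rw [← nhdsWithin_Ioc_eq_nhdsGT ht0]
        exact this.mono_left (nhdsWithin_mono _ Set.Ioc_subset_Icc_self)
      exact ((hkc.tendsto.mono_left nhdsWithin_le_nhds).mul hWc)
    have hev : ∀ᶠ ε in 𝓝[>] (0:ℝ),
        k b * W b - ∫ s in ε..b, k s * deriv w s ≤ k ε * W ε := by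
      filter_upwards [Ioc_mem_nhdsGT_of_mem (⟨le_rfl, hb⟩ : (0:ℝ) ∈ Set.Ico 0 b)] with ε hε
      have := stepB ε b hε.1 hε.2 hbt
      linarith
    have key := le_of_tendsto_of_tendsto
      (tendsto_const_nhds.sub tendsto1) tendsto2 hev
    have hk0 : k 0 = t ^ (-γ) := by simp [hk]
    have hW0 : W 0 = w 0 - w t := rfl
    rw [hk0, hW0] at key
    linarith
  -- Step D : let b → t⁻
  have hsub : Set.Icc (t/2) t ⊆ Set.Ioo 0 T := fun x hx => ⟨by linarith [hx.1], by linarith [hx.2]⟩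
  obtain ⟨L, hL⟩ := (isCompact_Icc (a := t/2) (b := t)).exists_bound_of_continuousOn (hd'.mono hsub)
  have hlip : ∀ b ∈ Set.Icc (t/2) t, |w b - w t| ≤ L * (t - b) := by
    intro b hb
    have := (convex_Icc (t/2) t).norm_image_sub_le_of_norm_hasDerivWithin_le
      (f := w) (f' := deriv w) (C := L)
      (fun x hx => (hd x (hsub hx)).hasDerivWithinAt) hL (Set.right_mem_Icc.mpr (by linarith)) hb
    rw [Real.norm_eq_abs, Real.norm_eq_abs, abs_sub_comm b t, abs_of_nonneg (by linarith [hb.2] : (0:ℝ) ≤ t - b)] at this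
    exact this
  have tendstoK : Tendsto (fun b => k b * W b) (𝓝[<] t) (𝓝 0) := by
    have hgt : Tendsto (fun b => L * (t - b) ^ (1 - γ)) (𝓝[<] t) (𝓝 0) := by
      have h2 : Tendsto (fun b => t - b) (𝓝[<] t) (𝓝 0) := by
        have h := (tendsto_const_nhds (x := t)).sub (tendsto_id (x := 𝓝 t))
        simp only [sub_self] at h
        exact h.mono_left nhdsWithin_le_nhds
      have h3 : ContinuousAt (fun x : ℝ => x ^ (1 - γ)) 0 :=
        Real.continuousAt_rpow_const 0 (1 - γ) (Or.inr (by linarith))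
      have h4 := (h3.tendsto.comp h2)
      rw [Real.zero_rpow (by linarith : 1 - γ ≠ 0)] at h4
      simpa using (tendsto_const_nhds (x := L)).mul h4
    apply squeeze_zero_norm' ?_ hgt
    · filter_upwards [Ico_mem_nhdsLT_of_mem (⟨by linarith, le_rfl⟩ : t ∈ Set.Ioc (t/2) t)] with b hb
      have htb : 0 < t - b := by linarith [hb.2]
      have h1 : ‖k b * W b‖ = (t - b) ^ (-γ) * |w b - w t| := by
        rw [norm_mul, Real.norm_eq_abs, Real.norm_eq_abs, abs_of_nonneg (Real.rpow_nonneg htb.le _)]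
      rw [h1]
      calc (t - b) ^ (-γ) * |w b - w t| ≤ (t - b) ^ (-γ) * (L * (t - b)) :=
            mul_le_mul_of_nonneg_left (hlip b ⟨hb.1, hb.2.le⟩) (Real.rpow_nonneg htb.le _)
        _ = L * ((t - b) ^ (-γ) * (t - b) ^ (1:ℝ)) := by rw [Real.rpow_one]; ring
        _ = L * (t - b) ^ (1 - γ) := by rw [← Real.rpow_add htb]; ring_nf
  have tendstoL : Tendsto (fun b => ∫ s in (0:ℝ)..b, k s * deriv w s) (𝓝[<] t)
      (𝓝 (∫ s in (0:ℝ)..t, k s * deriv w s)) := by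
    have kIcc : IntegrableOn (fun s => k s * deriv w s) (Set.uIcc 0 t) volume := by
      rw [Set.uIcc_of_le ht0.le, integrableOn_Icc_iff_integrableOn_Ioc]
      exact (intervalIntegrable_iff_integrableOn_Ioc_of_le ht0.le).mp kint
    have hcont := intervalIntegral.continuousOn_primitive_interval (μ := volume) kIcc
    have h0 := (hcont t (by rw [Set.uIcc_of_le ht0.le]; exact ⟨ht0.le, le_rfl⟩)).tendsto
    rw [← nhdsWithin_Ico_eq_nhdsLT ht0]
    exact h0.mono_left (nhdsWithin_mono _ (by rw [Set.uIcc_of_le ht0.le]; exact Set.Ico_subset_Icc_self))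
  have hevD : ∀ᶠ b in 𝓝[<] t, k b * W b + t ^ (-γ) * (w t - w 0) ≤ ∫ s in (0:ℝ)..b, k s * deriv w s := by
    filter_upwards [Ioo_mem_nhdsLT_of_mem (⟨ht0, le_rfl⟩ : t ∈ Set.Ioc 0 t)] with b hb
    exact stepC b hb.1 hb.2
  have final := le_of_tendsto_of_tendsto (tendstoK.add tendsto_const_nhds) tendstoL hevD
  simpa using final

/-- Comparison principle with non-increasing `f(t,·)`:
if `u₁ ≤ u₂` on `[0,t₁]` and `D_c^γ u₁ − D_c^γ u₂ ≤ f(t,u₁) − f(t,u₂)` a.e. on `(t₁,T)`,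
then `u₁ ≤ u₂` on `[0,T)`. -/
theorem caputo_comparison_nonincreasing
    (γ T t₁ : ℝ) (hγ : γ ∈ Set.Ioo (0:ℝ) 1) (ht₁ : t₁ ∈ Set.Ioo 0 T)
    (u₁ u₂ : ℝ → ℝ)
    (hc1 : ContinuousOn u₁ (Set.Ico 0 T)) (hc2 : ContinuousOn u₂ (Set.Ico 0 T))
    (hd1 : ∀ t ∈ Set.Ioo 0 T, DifferentiableAt ℝ u₁ t)
    (hd2 : ∀ t ∈ Set.Ioo 0 T, DifferentiableAt ℝ u₂ t)
    (hd1' : ContinuousOn (deriv u₁) (Set.Ioo 0 T))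
    (hd2' : ContinuousOn (deriv u₂) (Set.Ioo 0 T))
    (hd1'' : ∀ t ∈ Set.Ioo 0 T, IntervalIntegrable (deriv u₁) volume 0 t)
    (hd2'' : ∀ t ∈ Set.Ioo 0 T, IntervalIntegrable (deriv u₂) volume 0 t)
    (hcap1 : ∀ b ∈ Set.Ico 0 T, IntervalIntegrable (caputoDeriv γ u₁) volume 0 b)
    (hcap2 : ∀ b ∈ Set.Ico 0 T, IntervalIntegrable (caputoDeriv γ u₂) volume 0 b)
    (hle : ∀ t ∈ Set.Icc 0 t₁, u₁ t ≤ u₂ t)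
    (f : ℝ → ℝ → ℝ)
    (hmono : ∀ t ∈ Set.Ioo t₁ T, Antitone (f t))
    (hfint1 : ∀ b ∈ Set.Ico t₁ T, IntervalIntegrable (fun s => f s (u₁ s)) volume t₁ b)
    (hfint2 : ∀ b ∈ Set.Ico t₁ T, IntervalIntegrable (fun s => f s (u₂ s)) volume t₁ b)
    (hcap : ∀ᵐ t ∂volume.restrict (Set.Ioo t₁ T),
      caputoDeriv γ u₁ t - caputoDeriv γ u₂ t ≤ f t (u₁ t) - f t (u₂ t)) :
    ∀ t ∈ Set.Ico 0 T, u₁ t ≤ u₂ t := by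
  intro t ht
  by_contra hcon
  rw [not_le] at hcon
  obtain ⟨hγ0, hγ1⟩ := hγ
  obtain ⟨ht₁0, ht₁T⟩ := ht₁
  set w : ℝ → ℝ := fun s => u₁ s - u₂ s with hwdef
  have hwc : ContinuousOn w (Set.Ico 0 T) := hc1.sub hc2
  have hwderiv : ∀ s ∈ Set.Ioo 0 T, HasDerivAt w (deriv u₁ s - deriv u₂ s) s :=
    fun s hs => ((hd1 s hs).hasDerivAt).sub ((hd2 s hs).hasDerivAt)
  have hderiv_eq : ∀ s ∈ Set.Ioo 0 T, deriv w s = deriv u₁ s - deriv u₂ s :=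
    fun s hs => (hwderiv s hs).deriv
  have hwd : ∀ s ∈ Set.Ioo 0 T, HasDerivAt w (deriv w s) s := by
    intro s hs; rw [hderiv_eq s hs]; exact hwderiv s hs
  have hwd' : ContinuousOn (deriv w) (Set.Ioo 0 T) :=
    (hd1'.sub hd2').congr hderiv_eq
  have hwneg : ∀ s ∈ Set.Icc 0 t₁, w s ≤ 0 := fun s hs => sub_nonpos.mpr (hle s hs)
  have htgt : t₁ < t := by
    by_contra hle'
    push_neg at hle'
    exact absurd (hle t ⟨ht.1, hle'⟩) (not_le.mpr hcon)
  have hw_t : 0 < w t := sub_pos.mpr hcon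
  -- Lipschitz bound for w on [t₁, t]
  have hsubT : Set.Icc t₁ t ⊆ Set.Ioo 0 T :=
    fun x hx => ⟨lt_of_lt_of_le ht₁0 hx.1, lt_of_le_of_lt hx.2 ht.2⟩
  obtain ⟨C, hC⟩ := (isCompact_Icc (a := t₁) (b := t)).exists_bound_of_continuousOn
    (hwd'.mono hsubT)
  have hlip : LipschitzOnWith (Real.toNNReal C) w (Set.Icc t₁ t) := by
    apply (convex_Icc t₁ t).lipschitzOnWith_of_nnnorm_hasDerivWithin_le
      (f' := deriv w) (fun x hx => (hwd x (hsubT hx)).hasDerivWithinAt)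
    intro x hx
    have h1 := hC x hx
    have hC0 : 0 ≤ C := le_trans (norm_nonneg _) (hC x hx)
    rw [← NNReal.coe_le_coe, coe_nnnorm, Real.coe_toNNReal C hC0]
    exact h1
  -- the exceptional null set
  set P : ℝ → Prop := fun s =>
    caputoDeriv γ u₁ s - caputoDeriv γ u₂ s ≤ f s (u₁ s) - f s (u₂ s) with hPdef
  set N : Set ℝ := {x | ¬ P x} ∩ Set.Ioo t₁ T with hNdef
  have hNnull : volume N = 0 := by
    have h := hcap
    rw [ae_iff] at h
    rw [hNdef, ← Measure.restrict_apply' measurableSet_Ioo]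
    exact h
  -- first hitting times
  have hky : ∀ y ∈ Set.Ioo 0 (w t), ∃ τ ∈ Set.Ioo t₁ t,
      w τ = y ∧ ∀ s ∈ Set.Icc 0 τ, w s ≤ w τ := by
    intro y hy
    set S := {s ∈ Set.Icc 0 t | y ≤ w s} with hSdef
    have hcls : IsClosed S := by
      have : S = Set.Icc 0 t ∩ w ⁻¹' (Set.Ici y) := by
        ext x; simp [hSdef, Set.mem_sep_iff, and_comm]
      rw [this]
      exact ContinuousOn.preimage_isClosed_of_isClosed
        (hwc.mono (fun x hx => ⟨hx.1, lt_of_le_of_lt hx.2 ht.2⟩)) isClosed_Icc isClosed_Ici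
    have hSne : S.Nonempty := ⟨t, ⟨⟨le_of_lt (lt_trans ht₁0 htgt), le_rfl⟩, hy.2.le⟩⟩
    have hSbdd : BddBelow S := ⟨0, fun x hx => hx.1.1⟩
    have hτS : sInf S ∈ S := hcls.csInf_mem hSne hSbdd
    set τ := sInf S with hτdef
    have hlt : ∀ s, 0 ≤ s → s < τ → w s < y := by
      intro s hs0 hsτ
      by_contra hge
      push_neg at hge
      have hsS : s ∈ S := ⟨⟨hs0, le_trans hsτ.le hτS.1.2⟩, hge⟩
      exact absurd (csInf_le hSbdd hsS) (not_le.mpr hsτ)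
    have hτt₁ : t₁ < τ := by
      rcases lt_or_ge t₁ τ with h | h
      · exact h
      · have := hwneg τ ⟨hτS.1.1, h⟩
        linarith [hτS.2, hy.1]
    have hτ0 : 0 < τ := lt_trans ht₁0 hτt₁
    have hwτ : w τ = y := by
      by_contra hne
      have hlt' : y < w τ := lt_of_le_of_ne hτS.2 (Ne.symm hne)
      have hcw : ContinuousWithinAt w (Set.Ico 0 T) τ :=
        hwc τ ⟨hτ0.le, lt_of_le_of_lt hτS.1.2 ht.2⟩
      rw [Metric.continuousWithinAt_iff] at hcw
      obtain ⟨δ, hδ0, hδ⟩ := hcw (w τ - y) (by linarith)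
      set s := τ - min (δ/2) (τ/2) with hsdef
      have hmin0 : 0 < min (δ/2) (τ/2) := lt_min (by linarith) (by linarith)
      have hs0 : 0 ≤ s := by
        have : min (δ/2) (τ/2) ≤ τ/2 := min_le_right _ _
        simp only [hsdef]; linarith
      have hsτ' : s < τ := by simp only [hsdef]; linarith
      have hsT : s ∈ Set.Ico 0 T := ⟨hs0, by
        have := lt_of_le_of_lt hτS.1.2 ht.2; linarith⟩
      have hds : dist s τ < δ := by
        rw [Real.dist_eq, hsdef]
        have h1 : min (δ/2) (τ/2) ≤ δ/2 := min_le_left _ _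
        rw [abs_of_nonpos (by linarith)]
        linarith
      have := hδ hsT hds
      rw [Real.dist_eq] at this
      have hws : y < w s := by
        rcases abs_lt.mp this with ⟨h1, h2⟩
        linarith
      exact absurd hws (not_lt.mpr (hlt s hs0 hsτ').le)
    have hτlt : τ < t := by
      rcases lt_or_ge τ t with h | h
      · exact h
      · have : τ = t := le_antisymm hτS.1.2 h
        rw [this] at hwτ
        exact absurd hwτ (ne_of_gt hy.2)
    refine ⟨τ, ⟨hτt₁, hτlt⟩, hwτ, ?_⟩
    intro s hs
    rcases eq_or_lt_of_le hs.2 with h | h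
    · rw [h]
    · exact (hlt s hs.1 h).le.trans (le_of_eq hwτ.symm)
  -- select a good hitting point outside N
  have hexists : ∃ τ ∈ Set.Ioo t₁ t, τ ∉ N ∧ 0 < w τ ∧ ∀ s ∈ Set.Icc 0 τ, w s ≤ w τ := by
    by_contra hno
    push_neg at hno
    have himg : Set.Ioo 0 (w t) ⊆ w '' (N ∩ Set.Icc t₁ t) := by
      intro y hy
      obtain ⟨τ, hτ, hwτ, hmax⟩ := hky y hy
      have hτN : τ ∈ N := by
        by_contra hτN'
        have h0 : 0 < w τ := by rw [hwτ]; exact hy.1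
        obtain ⟨s, hs, hws⟩ := hno τ hτ hτN' h0
        exact absurd (hmax s hs) (not_le.mpr hws)
      exact ⟨τ, ⟨hτN, ⟨hτ.1.le, hτ.2.le⟩⟩, hwτ⟩
    have hA0 : volume (N ∩ Set.Icc t₁ t) = 0 :=
      measure_mono_null Set.inter_subset_left hNnull
    have himg0 : volume (w '' (N ∩ Set.Icc t₁ t)) = 0 := by
      have hl2 := LipschitzOnWith.hausdorffMeasure_image_le (f := w)
        (s := N ∩ Set.Icc t₁ t) (hlip.mono Set.inter_subset_right)
        (zero_le_one (α := ℝ))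
      rw [MeasureTheory.hausdorffMeasure_real] at hl2
      refine le_antisymm (le_trans hl2 ?_) zero_le
      rw [hA0, mul_zero]
    have := measure_mono_null himg himg0
    rw [Real.volume_Ioo, sub_zero] at this
    exact absurd this (by simp [ENNReal.ofReal_eq_zero]; linarith)
  obtain ⟨τ, hτmem, hτN, hτpos, hτmax⟩ := hexists
  have hτIoo : τ ∈ Set.Ioo 0 T := ⟨lt_trans ht₁0 hτmem.1, lt_trans hτmem.2 ht.2⟩
  -- a.e. inequality holds at τ
  have hPτ : P τ := by
    by_contra hPn
    exact hτN ⟨hPn, ⟨hτmem.1, hτIoo.2⟩⟩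
  have hfineq : f τ (u₁ τ) ≤ f τ (u₂ τ) :=
    hmono τ ⟨hτmem.1, hτIoo.2⟩ (le_of_lt (sub_pos.mp hτpos))
  have hcapτ : caputoDeriv γ u₁ τ - caputoDeriv γ u₂ τ ≤ 0 := le_trans hPτ (by linarith)
  -- positivity of the Caputo derivative of w at τ
  have hker1 : IntervalIntegrable (fun s => (τ - s) ^ (-γ) * deriv u₁ s) volume 0 τ :=
    kernel_integrable ⟨hγ0, hγ1⟩ hτIoo _ hd1' (hd1'' τ hτIoo)
  have hker2 : IntervalIntegrable (fun s => (τ - s) ^ (-γ) * deriv u₂ s) volume 0 τ :=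
    kernel_integrable ⟨hγ0, hγ1⟩ hτIoo _ hd2' (hd2'' τ hτIoo)
  have hciden : caputoDeriv γ u₁ τ - caputoDeriv γ u₂ τ =
      (1 / Real.Gamma (1 - γ)) * ∫ s in (0:ℝ)..τ, (τ - s) ^ (-γ) * deriv w s := by
    unfold caputoDeriv
    rw [← mul_sub, ← intervalIntegral.integral_sub hker1 hker2]
    congr 1
    apply intervalIntegral.integral_congr_ae
    apply MeasureTheory.ae_of_all
    intro s hs
    rw [Set.uIoc_of_le hτIoo.1.le] at hs
    have hsIoo : s ∈ Set.Ioo 0 T := ⟨hs.1, lt_of_le_of_lt hs.2 hτIoo.2⟩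
    rw [hderiv_eq s hsIoo]
    ring
  have hwint : IntervalIntegrable (deriv w) volume 0 τ := by
    apply ((hd1'' τ hτIoo).sub (hd2'' τ hτIoo)).congr
    apply Set.EqOn.symm
    intro s hs
    rw [Set.uIoc_of_le hτIoo.1.le] at hs
    exact hderiv_eq s ⟨hs.1, lt_of_le_of_lt hs.2 hτIoo.2⟩
  have hkey := key_lower_bound ⟨hγ0, hγ1⟩ hτIoo w
    (hwc.mono (fun x hx => ⟨hx.1, lt_of_le_of_lt hx.2 hτIoo.2⟩)) hwd hwd' hwint hτmax
  have hw0 : w 0 ≤ 0 := hwneg 0 ⟨le_rfl, ht₁0.le⟩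
  have hτγ : (0:ℝ) < τ ^ (-γ) := Real.rpow_pos_of_pos hτIoo.1 _
  have hgam : (0:ℝ) < Real.Gamma (1 - γ) := Real.Gamma_pos_of_pos (by linarith)
  have hIpos : (0:ℝ) < ∫ s in (0:ℝ)..τ, (τ - s) ^ (-γ) * deriv w s := by
    have : (0:ℝ) < τ ^ (-γ) * (w τ - w 0) := mul_pos hτγ (by linarith)
    linarith [hkey]
  have : (0:ℝ) < caputoDeriv γ u₁ τ - caputoDeriv γ u₂ τ := by
    rw [hciden]
    positivity
  linarith
end

section
/- Let γ ∈ (0,1). Then the Mittag-Leffler function satisfies E_γ(−x) > 0 for every x ≥ 0, where E_γ(z) = ∑_{n=0}^∞ zⁿ/Γ(nγ+1). -/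
open MeasureTheory intervalIntegral Set Filter Topology

/-- The Mittag-Leffler function `E_γ(z) = ∑_{n=0}^∞ zⁿ/Γ(nγ+1)`. -/
noncomputable def mittagLeffler (γ : ℝ) (z : ℝ) : ℝ :=
  ∑' n : ℕ, z ^ n / Real.Gamma ((n : ℝ) * γ + 1)

noncomputable def Uml (γ : ℝ) (t : ℝ) : ℝ :=
  ∑' n : ℕ, (-1)^n * t ^ ((n:ℝ)*γ) / Real.Gamma ((n:ℝ)*γ+1)

lemma realBeta {p q : ℝ} (hp : 0 < p) (hq : 0 < q) :
    ∫ v in (0:ℝ)..1, v ^ (p-1) * (1-v) ^ (q-1) =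
      Real.Gamma p * Real.Gamma q / Real.Gamma (p+q) := by
  have h := Complex.Gamma_mul_Gamma_eq_betaIntegral (s := (p:ℂ)) (t := (q:ℂ))
      (by simpa using hp) (by simpa using hq)
  have hbeta : Complex.betaIntegral (p:ℂ) (q:ℂ) =
      ((∫ v in (0:ℝ)..1, v ^ (p-1) * (1-v) ^ (q-1) : ℝ) : ℂ) := by
    rw [Complex.betaIntegral, ← intervalIntegral.integral_ofReal]
    apply intervalIntegral.integral_congr
    intro x hx
    rw [Set.uIcc_of_le (by norm_num : (0:ℝ) ≤ 1)] at hx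
    obtain ⟨hx0, hx1⟩ := hx
    show (x:ℂ) ^ ((p:ℂ) - 1) * (1 - (x:ℂ)) ^ ((q:ℂ) - 1)
        = ((x ^ (p - 1) * (1 - x) ^ (q - 1) : ℝ) : ℂ)
    symm
    rw [Complex.ofReal_mul, Complex.ofReal_cpow hx0,
      Complex.ofReal_cpow (by linarith : (0:ℝ) ≤ 1 - x)]
    push_cast
    ring
  rw [hbeta, ← Complex.ofReal_add, Complex.Gamma_ofReal, Complex.Gamma_ofReal,
    Complex.Gamma_ofReal] at h
  have hne : Real.Gamma (p+q) ≠ 0 := (Real.Gamma_pos_of_pos (by linarith)).ne'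
  have : Real.Gamma p * Real.Gamma q =
      Real.Gamma (p+q) * ∫ v in (0:ℝ)..1, v ^ (p-1) * (1-v) ^ (q-1) := by
    exact_mod_cast h
  rw [this]
  field_simp

lemma betaScaled {γ : ℝ} (hγ0 : 0 < γ) {c t : ℝ} (hc : 0 ≤ c) (ht : 0 < t) :
    ∫ s in (0:ℝ)..t, (t-s) ^ (γ-1) * s ^ c
      = (Real.Gamma (c+1) * Real.Gamma γ / Real.Gamma (c+1+γ)) * t ^ (γ+c) := by
  have key := intervalIntegral.integral_comp_mul_right
    (fun s => (t-s) ^ (γ-1) * s ^ c) ht.ne' (a := 0) (b := 1)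
  simp only [zero_mul, one_mul, smul_eq_mul] at key
  have congr1 : ∫ x in (0:ℝ)..1, (fun s => (t-s) ^ (γ-1) * s ^ c) (x * t)
      = ∫ x in (0:ℝ)..1, (t ^ (γ-1) * t ^ c) * (x ^ ((c+1)-1) * (1-x) ^ (γ-1)) := by
    apply intervalIntegral.integral_congr
    intro x hx
    rw [Set.uIcc_of_le (by norm_num : (0:ℝ) ≤ 1)] at hx
    obtain ⟨hx0, hx1⟩ := hx
    have h1 : t - x * t = t * (1 - x) := by ring
    have h2 : (x * t) ^ c = x ^ c * t ^ c := Real.mul_rpow hx0 ht.le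
    simp only [h1, add_sub_cancel_right]
    rw [Real.mul_rpow ht.le (by linarith), h2]
    ring
  rw [congr1, intervalIntegral.integral_const_mul,
    realBeta (by linarith : (0:ℝ) < c+1) hγ0] at key
  have hpow : t * (t ^ (γ-1) * t ^ c) = t ^ (γ+c) := by
    rw [← Real.rpow_add ht (γ-1) c]
    nth_rewrite 1 [← Real.rpow_one t]
    rw [← Real.rpow_add ht]
    ring_nf
  have hI : ∫ s in (0:ℝ)..t, (t-s) ^ (γ-1) * s ^ c
      = t * (t ^ (γ-1) * t ^ c * (Real.Gamma (c+1) * Real.Gamma γ / Real.Gamma (c+1+γ))) := by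
    rw [key]
    field_simp
  rw [hI, ← hpow]
  ring

lemma gamma_arg_pos {γ : ℝ} (hγ0 : 0 < γ) (n : ℕ) : (0:ℝ) < (n:ℝ)*γ+1 := by positivity

lemma gamma_ml_pos {γ : ℝ} (hγ0 : 0 < γ) (n : ℕ) : 0 < Real.Gamma ((n:ℝ)*γ+1) :=
  Real.Gamma_pos_of_pos (gamma_arg_pos hγ0 n)

lemma B_eq {γ : ℝ} (hγ0 : 0 < γ) (n : ℕ) :
    ∫ v in (0:ℝ)..1, v ^ ((n:ℝ)*γ) * (1-v) ^ (γ-1)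
      = Real.Gamma ((n:ℝ)*γ+1) * Real.Gamma γ / Real.Gamma (((n:ℝ)+1)*γ+1) := by
  have h := realBeta (p := (n:ℝ)*γ+1) (q := γ) (gamma_arg_pos hγ0 n) hγ0
  have e1 : (n:ℝ)*γ+1-1 = (n:ℝ)*γ := by ring
  have e2 : (n:ℝ)*γ+1+γ = ((n:ℝ)+1)*γ+1 := by ring
  rw [e1, e2] at h
  exact h

lemma kernel_intervalIntegrable {γ : ℝ} (hγ0 : 0 < γ) (c a b : ℝ) :
    IntervalIntegrable (fun v : ℝ => (c-v) ^ (γ-1)) volume a b := by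
  have := (intervalIntegral.intervalIntegrable_rpow' (a := c-a) (b := c-b)
    (by linarith : (-1:ℝ) < γ-1)).comp_sub_left c
  simpa using this

lemma B_tendsto_zero {γ : ℝ} (hγ0 : 0 < γ) (hγ1 : γ < 1) :
    Tendsto (fun n : ℕ => ∫ v in (0:ℝ)..1, v ^ ((n:ℝ)*γ) * (1-v) ^ (γ-1))
      atTop (𝓝 0) := by
  have hker : IntervalIntegrable (fun v : ℝ => (1-v) ^ (γ-1)) volume 0 1 :=
    kernel_intervalIntegrable hγ0 1 0 1
  have hker' : IntegrableOn (fun v : ℝ => (1-v) ^ (γ-1)) (Ioo 0 1) volume := by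
    rw [intervalIntegrable_iff_integrableOn_Ioc_of_le (by norm_num : (0:ℝ) ≤ 1)] at hker
    exact hker.mono_set Ioo_subset_Ioc_self
  have hmeas : ∀ n : ℕ, AEStronglyMeasurable
      (fun v : ℝ => v ^ ((n:ℝ)*γ) * (1-v) ^ (γ-1)) (volume.restrict (Ioo 0 1)) := by
    intro n
    apply ContinuousOn.aestronglyMeasurable _ measurableSet_Ioo
    intro v hv
    exact (((Real.continuousAt_rpow_const v _ (Or.inl hv.1.ne')).mul
      ((Real.continuousAt_rpow_const (1-v) _ (Or.inl (by simp; linarith [hv.2]))).comp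
        (by fun_prop))).continuousWithinAt)
  have key : Tendsto (fun n : ℕ => ∫ v in Ioo (0:ℝ) 1, v ^ ((n:ℝ)*γ) * (1-v) ^ (γ-1))
      atTop (𝓝 (∫ _v in Ioo (0:ℝ) 1, (0:ℝ))) := by
    apply MeasureTheory.tendsto_integral_of_dominated_convergence
      (fun v : ℝ => (1-v) ^ (γ-1)) hmeas hker'
    · intro n
      rw [ae_restrict_iff' measurableSet_Ioo]
      filter_upwards with v hv
      obtain ⟨hv0, hv1⟩ := hv
      have h1 : v ^ ((n:ℝ)*γ) ≤ 1 :=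
        Real.rpow_le_one hv0.le hv1.le (by positivity)
      have h2 : (0:ℝ) ≤ (1-v) ^ (γ-1) := Real.rpow_nonneg (by linarith) _
      have h3 : (0:ℝ) ≤ v ^ ((n:ℝ)*γ) := Real.rpow_nonneg hv0.le _
      rw [Real.norm_eq_abs, abs_of_nonneg (by positivity)]
      nlinarith
    · rw [ae_restrict_iff' measurableSet_Ioo]
      filter_upwards with v hv
      obtain ⟨hv0, hv1⟩ := hv
      have hvγ : v ^ γ < 1 := Real.rpow_lt_one hv0.le hv1 hγ0
      have hconv : Tendsto (fun n : ℕ => v ^ ((n:ℝ)*γ)) atTop (𝓝 0) := by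
        have : (fun n : ℕ => v ^ ((n:ℝ)*γ)) = fun n : ℕ => (v ^ γ) ^ n := by
          funext n
          rw [mul_comm, Real.rpow_mul hv0.le, Real.rpow_natCast]
        rw [this]
        exact tendsto_pow_atTop_nhds_zero_of_lt_one (Real.rpow_nonneg hv0.le _) hvγ
      simpa using hconv.mul_const ((1-v) ^ (γ-1))
  rw [MeasureTheory.integral_zero] at key
  have : ∀ n : ℕ, ∫ v in (0:ℝ)..1, v ^ ((n:ℝ)*γ) * (1-v) ^ (γ-1)
      = ∫ v in Ioo (0:ℝ) 1, v ^ ((n:ℝ)*γ) * (1-v) ^ (γ-1) := by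
    intro n
    rw [intervalIntegral.integral_of_le (by norm_num : (0:ℝ) ≤ 1),
      MeasureTheory.integral_Ioc_eq_integral_Ioo]
  simpa only [this] using key

lemma summable_ml {γ : ℝ} (hγ0 : 0 < γ) (hγ1 : γ < 1) (z : ℝ) :
    Summable (fun n : ℕ => z ^ n / Real.Gamma ((n:ℝ)*γ+1)) := by
  have hΓγ : 0 < Real.Gamma γ := Real.Gamma_pos_of_pos hγ0
  apply summable_of_ratio_norm_eventually_le (r := 1/2) (by norm_num)
  have hev : ∀ᶠ n : ℕ in atTop,
      (∫ v in (0:ℝ)..1, v ^ ((n:ℝ)*γ) * (1-v) ^ (γ-1)) ≤ Real.Gamma γ / (2*(|z|+1)) := by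
    apply (B_tendsto_zero hγ0 hγ1).eventually_le_const
    positivity
  filter_upwards [hev] with n hn
  have hBeq := B_eq hγ0 n
  have hp1 : 0 < Real.Gamma ((n:ℝ)*γ+1) := gamma_ml_pos hγ0 n
  have hp2 : 0 < Real.Gamma (((n:ℝ)+1)*γ+1) := by
    have := gamma_ml_pos hγ0 (n+1); push_cast at this ⊢; linarith
  have hratio : Real.Gamma ((n:ℝ)*γ+1) * Real.Gamma γ / Real.Gamma (((n:ℝ)+1)*γ+1)
      ≤ Real.Gamma γ / (2*(|z|+1)) := hBeq ▸ hn
  simp only [norm_div, norm_pow, Real.norm_eq_abs]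
  push_cast
  rw [abs_of_pos hp1, abs_of_pos hp2]
  rw [← mul_div_assoc, div_le_div_iff₀ hp2 (by positivity : (0:ℝ) < Real.Gamma ((n:ℝ)*γ+1)), pow_succ]
  rw [div_le_div_iff₀ hp2 (by positivity : (0:ℝ) < 2*(|z|+1))] at hratio
  have hΓle : Real.Gamma ((n:ℝ)*γ+1) * (2*(|z|+1)) ≤ Real.Gamma (((n:ℝ)+1)*γ+1) := by
    have h3 : (Real.Gamma ((n:ℝ)*γ+1) * (2*(|z|+1))) * Real.Gamma γ
        ≤ Real.Gamma (((n:ℝ)+1)*γ+1) * Real.Gamma γ := by nlinarith [hratio]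
    exact le_of_mul_le_mul_right (by linarith) hΓγ
  have hX : (0:ℝ) ≤ |z|^n * |z| := by positivity
  have e1 : (|z|^n * |z|) * (Real.Gamma ((n:ℝ)*γ+1) * (2*(|z|+1)))
      ≤ (|z|^n * |z|) * Real.Gamma (((n:ℝ)+1)*γ+1) :=
    mul_le_mul_of_nonneg_left hΓle hX
  have e2 : |z|^n * |z| * Real.Gamma (((n:ℝ)+1)*γ+1)
      ≤ |z|^n * (|z|+1) * Real.Gamma (((n:ℝ)+1)*γ+1) := by
    have : |z| ≤ |z| + 1 := by linarith
    nlinarith [pow_nonneg (abs_nonneg z) n, hp2]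
  have e3 : (|z|+1) * (2*(|z|^n * |z| * Real.Gamma ((n:ℝ)*γ+1)))
      ≤ (|z|+1) * (|z|^n * Real.Gamma (((n:ℝ)+1)*γ+1)) := by nlinarith [e1, e2]
  have e4 := le_of_mul_le_mul_left e3 (by positivity : (0:ℝ) < |z|+1)
  linarith

lemma term_eq {γ t : ℝ} (ht : 0 ≤ t) (n : ℕ) :
    (-(t^γ))^n / Real.Gamma ((n:ℝ)*γ+1)
      = (-1)^n * t ^ ((n:ℝ)*γ) / Real.Gamma ((n:ℝ)*γ+1) := by
  rw [neg_pow]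
  congr 2
  rw [mul_comm (n:ℝ) γ, Real.rpow_mul ht, Real.rpow_natCast]

lemma U_eq_ml {γ t : ℝ} (ht : 0 ≤ t) : mittagLeffler γ (-(t^γ)) = Uml γ t := by
  unfold mittagLeffler Uml
  exact tsum_congr (term_eq ht)

lemma summable_U {γ t : ℝ} (hγ0 : 0 < γ) (hγ1 : γ < 1) (ht : 0 ≤ t) :
    Summable (fun n : ℕ => (-1)^n * t ^ ((n:ℝ)*γ) / Real.Gamma ((n:ℝ)*γ+1)) :=
  (summable_ml hγ0 hγ1 (-(t^γ))).congr (term_eq ht)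

lemma summable_U_abs {γ t : ℝ} (hγ0 : 0 < γ) (hγ1 : γ < 1) (ht : 0 ≤ t) :
    Summable (fun n : ℕ => t ^ ((n:ℝ)*γ) / Real.Gamma ((n:ℝ)*γ+1)) := by
  apply (summable_ml hγ0 hγ1 (t^γ)).congr
  intro n
  rw [mul_comm (n:ℝ) γ, Real.rpow_mul ht, Real.rpow_natCast]

lemma U_zero {γ : ℝ} (hγ0 : 0 < γ) : Uml γ 0 = 1 := by
  unfold Uml
  rw [tsum_eq_single 0]
  · norm_num [Real.Gamma_one]
  · intro n hn
    have hne : ((n:ℝ)*γ) ≠ 0 := by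
      have : (0:ℝ) < n := by exact_mod_cast Nat.pos_of_ne_zero hn
      positivity
    rw [Real.zero_rpow hne, mul_zero, zero_div]

lemma U_continuousOn {γ : ℝ} (hγ0 : 0 < γ) (hγ1 : γ < 1) (T : ℝ) (hT : 0 ≤ T) :
    ContinuousOn (Uml γ) (Icc 0 T) := by
  have hu : Summable (fun n : ℕ => T ^ ((n:ℝ)*γ) / Real.Gamma ((n:ℝ)*γ+1)) :=
    summable_U_abs hγ0 hγ1 hT
  have hb : ∀ (n : ℕ), ∀ t ∈ Icc (0:ℝ) T,
      ‖(-1)^n * t ^ ((n:ℝ)*γ) / Real.Gamma ((n:ℝ)*γ+1)‖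
        ≤ T ^ ((n:ℝ)*γ) / Real.Gamma ((n:ℝ)*γ+1) := by
    intro n t ht
    obtain ⟨ht0, htT⟩ := ht
    have hΓ := gamma_ml_pos (γ := γ) hγ0 n
    rw [Real.norm_eq_abs, abs_div, abs_of_pos hΓ, abs_mul, abs_pow, abs_neg, abs_one,
      one_pow, one_mul, abs_of_nonneg (Real.rpow_nonneg ht0 _)]
    exact div_le_div_of_nonneg_right (Real.rpow_le_rpow ht0 htT (by positivity)) hΓ.le
  have := tendstoUniformlyOn_tsum_nat hu hb
  apply this.continuousOn
  apply Filter.Eventually.frequently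
  filter_upwards with N
  apply continuousOn_finset_sum
  intro n _
  apply ContinuousOn.div_const
  apply ContinuousOn.mul continuousOn_const
  exact (Real.continuous_rpow_const (by positivity)).continuousOn

lemma volterra {γ t : ℝ} (hγ0 : 0 < γ) (hγ1 : γ < 1) (ht : 0 < t) :
    ∫ s in (0:ℝ)..t, (t-s)^(γ-1) * Uml γ s = Real.Gamma γ * (1 - Uml γ t) := by
  set F : ℕ → ℝ → ℝ :=
    fun n s => ((-1)^n / Real.Gamma ((n:ℝ)*γ+1)) * ((t-s)^(γ-1) * s^((n:ℝ)*γ)) with hF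
  have hΓγ : 0 < Real.Gamma γ := Real.Gamma_pos_of_pos hγ0
  -- pointwise identity
  have h1 : ∀ s : ℝ, (t-s)^(γ-1) * Uml γ s = ∑' n, F n s := by
    intro s
    rw [Uml, ← tsum_mul_left]
    apply tsum_congr
    intro n
    rw [hF]
    ring
  -- interval integrability of each term
  have h2 : ∀ n : ℕ, IntervalIntegrable (F n) volume 0 t := by
    intro n
    apply IntervalIntegrable.const_mul
    apply (kernel_intervalIntegrable hγ0 t 0 t).mul_continuousOn
    exact (Real.continuous_rpow_const (by positivity)).continuousOn
  have h2' : ∀ n : ℕ, IntegrableOn (F n) (Ioo 0 t) volume := by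
    intro n
    have := (h2 n)
    rw [intervalIntegrable_iff_integrableOn_Ioc_of_le ht.le] at this
    exact this.mono_set Ioo_subset_Ioc_self
  -- the beta integral of each term
  have h3 : ∀ n : ℕ, ∫ s in (0:ℝ)..t, (t-s)^(γ-1) * s^((n:ℝ)*γ)
      = (Real.Gamma ((n:ℝ)*γ+1) * Real.Gamma γ / Real.Gamma ((n:ℝ)*γ+1+γ)) * t^(γ+(n:ℝ)*γ) :=
    fun n => betaScaled hγ0 (by positivity) ht
  have hioo : ∀ g : ℝ → ℝ, ∫ s in (0:ℝ)..t, g s = ∫ s in Ioo (0:ℝ) t, g s := by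
    intro g
    rw [intervalIntegral.integral_of_le ht.le, MeasureTheory.integral_Ioc_eq_integral_Ioo]
  -- measurability
  have hmeas : ∀ n : ℕ, AEStronglyMeasurable (F n) (volume.restrict (Ioo 0 t)) := by
    intro n
    apply ContinuousOn.aestronglyMeasurable _ measurableSet_Ioo
    apply ContinuousOn.mul continuousOn_const
    apply ContinuousOn.mul
    · intro s hs
      apply ContinuousAt.continuousWithinAt
      apply ContinuousAt.comp (g := fun x : ℝ => x ^ (γ-1))
      · exact Real.continuousAt_rpow_const _ _ (Or.inl (by simp; intro h; linarith [hs.2]))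
      · fun_prop
    · exact (Real.continuous_rpow_const (by positivity)).continuousOn
  -- the norm integrals
  have hval : ∀ n : ℕ, ∫ s in Ioo (0:ℝ) t, ‖F n s‖
      = Real.Gamma γ * t^(γ+(n:ℝ)*γ) / Real.Gamma ((n:ℝ)*γ+1+γ) := by
    intro n
    have hΓ := gamma_ml_pos (γ := γ) hγ0 n
    have heq : ∀ s ∈ Ioo (0:ℝ) t, ‖F n s‖
        = (1/Real.Gamma ((n:ℝ)*γ+1)) * ((t-s)^(γ-1) * s^((n:ℝ)*γ)) := by
      intro s hs
      rw [hF]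
      simp only [Real.norm_eq_abs, abs_mul, abs_div, abs_pow, abs_neg, abs_one, one_pow,
        abs_of_pos hΓ]
      rw [abs_of_nonneg (Real.rpow_nonneg (by linarith [hs.2] : (0:ℝ) ≤ t-s) _),
        abs_of_nonneg (Real.rpow_nonneg (le_of_lt hs.1) _)]
    rw [setIntegral_congr_fun measurableSet_Ioo heq, MeasureTheory.integral_const_mul,
      ← hioo, h3]
    field_simp
  -- summability of the norm integrals
  have hsum2 : Summable (fun n : ℕ => Real.Gamma γ * t^(γ+(n:ℝ)*γ) / Real.Gamma ((n:ℝ)*γ+1+γ)) := by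
    have S := summable_ml hγ0 hγ1 (t^γ)
    have S1 : Summable (fun n : ℕ => (t^γ)^(n+1) / Real.Gamma (((n+1:ℕ):ℝ)*γ+1)) := by
      exact_mod_cast (summable_nat_add_iff 1).mpr S
    apply (S1.mul_left (Real.Gamma γ)).congr
    intro n
    have e1 : (t^γ)^(n+1) = t^(γ+(n:ℝ)*γ) := by
      rw [← Real.rpow_natCast (t^γ) (n+1), ← Real.rpow_mul ht.le]
      congr 1
      push_cast
      ring
    have e2 : (((n+1:ℕ)):ℝ)*γ+1 = (n:ℝ)*γ+1+γ := by push_cast; ring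
    rw [e1, e2]
    ring
  -- apply integral_tsum
  have hfin : (∑' n : ℕ, ∫⁻ s in Ioo (0:ℝ) t, ‖F n s‖₊) ≠ ⊤ := by
    have : ∀ n : ℕ, ∫⁻ s in Ioo (0:ℝ) t, ‖F n s‖₊
        = ENNReal.ofReal (Real.Gamma γ * t^(γ+(n:ℝ)*γ) / Real.Gamma ((n:ℝ)*γ+1+γ)) := by
      intro n
      rw [← hval n, MeasureTheory.ofReal_integral_norm_eq_lintegral_enorm (h2' n)]; rfl
    rw [funext this, ← ENNReal.ofReal_tsum_of_nonneg (fun n => by positivity) hsum2]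
    exact ENNReal.ofReal_ne_top
  have hswap := MeasureTheory.integral_tsum hmeas hfin
  -- put it together
  rw [hioo]
  simp_rw [h1]
  rw [hswap]
  have h4 : ∀ n : ℕ, ∫ s in Ioo (0:ℝ) t, F n s
      = ((-1)^n * Real.Gamma γ) * (t^(γ+(n:ℝ)*γ) / Real.Gamma ((n:ℝ)*γ+1+γ)) := by
    intro n
    rw [hF]
    simp only
    rw [MeasureTheory.integral_const_mul, ← hioo, h3]
    have hΓ := gamma_ml_pos (γ := γ) hγ0 n
    field_simp
  rw [funext h4]
  -- now compute the tsum
  have hU := Summable.tsum_eq_zero_add (summable_U hγ0 hγ1 ht.le)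
  have hg0 : (-1:ℝ)^(0:ℕ) * t ^ (((0:ℕ):ℝ)*γ) / Real.Gamma (((0:ℕ):ℝ)*γ+1) = 1 := by
    norm_num [Real.Gamma_one]
  rw [hg0] at hU
  -- hU : Uml γ t = 1 + ∑' n, g (n+1)
  have hterm : ∀ n : ℕ,
      ((-1)^n * Real.Gamma γ) * (t^(γ+(n:ℝ)*γ) / Real.Gamma ((n:ℝ)*γ+1+γ))
      = Real.Gamma γ * -((-1)^(n+1) * t ^ (((n+1:ℕ):ℝ)*γ) / Real.Gamma (((n+1:ℕ):ℝ)*γ+1)) := by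
    intro n
    have e1 : (((n+1:ℕ)):ℝ)*γ = γ+(n:ℝ)*γ := by push_cast; ring
    have e2 : γ+(n:ℝ)*γ+1 = (n:ℝ)*γ+1+γ := by ring
    rw [e1, e2, pow_succ]
    ring
  rw [funext hterm, tsum_mul_left, tsum_neg]
  have hU' : Uml γ t = 1 + ∑' (n:ℕ), (-1)^(n+1) * t ^ ((((n+1:ℕ)):ℝ)*γ) / Real.Gamma ((((n+1:ℕ)):ℝ)*γ+1) := hU
  rw [hU']
  ring

set_option maxHeartbeats 1000000 in
lemma U_pos {γ : ℝ} (hγ0 : 0 < γ) (hγ1 : γ < 1) : ∀ t : ℝ, 0 ≤ t → 0 < Uml γ t := by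
  have hΓγ : 0 < Real.Gamma γ := Real.Gamma_pos_of_pos hγ0
  by_contra hcon
  push_neg at hcon
  obtain ⟨t₁, ht₁0, ht₁⟩ := hcon
  have ht₁pos : 0 < t₁ := by
    rcases ht₁0.lt_or_eq with h | h
    · exact h
    · exfalso; rw [← h, U_zero hγ0] at ht₁; linarith
  set S : Set ℝ := Icc 0 t₁ ∩ (Uml γ) ⁻¹' (Iic 0) with hSdef
  have hS_ne : S.Nonempty := ⟨t₁, ⟨ht₁0, le_refl _⟩, ht₁⟩
  have hScl : IsClosed S :=
    (U_continuousOn hγ0 hγ1 t₁ ht₁0).preimage_isClosed_of_isClosed isClosed_Icc isClosed_Iic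
  have hbdd : BddBelow S := ⟨0, fun x hx => hx.1.1⟩
  set t₀ := sInf S with ht₀def
  have ht₀S : t₀ ∈ S := hScl.csInf_mem hS_ne hbdd
  obtain ⟨⟨ht₀0, ht₀t₁⟩, ht₀le⟩ := ht₀S
  have ht₀le' : Uml γ t₀ ≤ 0 := ht₀le
  have hpos_below : ∀ τ, 0 ≤ τ → τ < t₀ → 0 < Uml γ τ := by
    intro τ hτ0 hτlt
    by_contra hc
    push_neg at hc
    have hτS : τ ∈ S := ⟨⟨hτ0, le_trans hτlt.le ht₀t₁⟩, hc⟩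
    exact absurd (csInf_le hbdd hτS) (not_le.mpr hτlt)
  have ht₀pos : 0 < t₀ := by
    rcases ht₀0.lt_or_eq with h | h
    · exact h
    · exfalso
      rw [← h, U_zero hγ0] at ht₀le'
      linarith
  -- U t₀ = 0
  have ht₀ge : 0 ≤ Uml γ t₀ := by
    have hnb : (𝓝[Ico 0 t₀] t₀).NeBot := by
      rw [← mem_closure_iff_nhdsWithin_neBot, closure_Ico ht₀pos.ne]
      exact ⟨ht₀0, le_refl t₀⟩
    have htend : Tendsto (Uml γ) (𝓝[Ico 0 t₀] t₀) (𝓝 (Uml γ t₀)) :=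
      ((U_continuousOn hγ0 hγ1 t₀ ht₀0) t₀ ⟨ht₀0, le_refl _⟩).mono Ico_subset_Icc_self
    exact ge_of_tendsto htend
      (eventually_nhdsWithin_of_forall (fun x hx => (hpos_below x hx.1 hx.2).le))
  have hU_t₀ : Uml γ t₀ = 0 := le_antisymm ht₀le' ht₀ge
  -- choose δ and τ₀
  set δ := min (t₀/2) ((γ * Real.Gamma γ / 4) ^ (γ⁻¹)) with hδdef
  have hδpos : 0 < δ :=
    lt_min (by linarith) (Real.rpow_pos_of_pos (by positivity) _)
  set τ₀ := t₀ - δ with hτ₀def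
  have hδle : δ ≤ t₀/2 := min_le_left _ _
  have hτ₀pos : 0 < τ₀ := by simp only [hτ₀def]; linarith
  have hτ₀lt : τ₀ < t₀ := by simp only [hτ₀def]; linarith
  have hδγ : δ^γ ≤ γ * Real.Gamma γ / 4 := by
    have h1 : δ^γ ≤ ((γ * Real.Gamma γ / 4) ^ (γ⁻¹))^γ :=
      Real.rpow_le_rpow hδpos.le (min_le_right _ _) hγ0.le
    rwa [Real.rpow_inv_rpow (by positivity) hγ0.ne'] at h1
  -- the max point on [τ₀, t₀]
  obtain ⟨τs, hτs_mem, hτs_max⟩ :=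
    (isCompact_Icc (a := τ₀) (b := t₀)).exists_isMaxOn ⟨t₀, ⟨hτ₀lt.le, le_refl _⟩⟩
      ((U_continuousOn hγ0 hγ1 t₀ ht₀0).mono
        (Icc_subset_Icc hτ₀pos.le (le_refl _)))
  have hτs_max' : ∀ y ∈ Icc τ₀ t₀, Uml γ y ≤ Uml γ τs := hτs_max
  have hUτs_pos : 0 < Uml γ τs :=
    lt_of_lt_of_le (hpos_below τ₀ hτ₀pos.le hτ₀lt) (hτs_max' τ₀ ⟨le_refl _, hτ₀lt.le⟩)
  have hτs_lt : τs < t₀ := by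
    rcases hτs_mem.2.lt_or_eq with h | h
    · exact h
    · exfalso; rw [h, hU_t₀] at hUτs_pos; linarith
  have hτs_pos : 0 < τs := lt_of_lt_of_le hτ₀pos hτs_mem.1
  -- Volterra at t₀ and τs
  have hV0 := volterra hγ0 hγ1 ht₀pos
  rw [hU_t₀, sub_zero, mul_one] at hV0
  have hVs := volterra hγ0 hγ1 hτs_pos
  -- integrability pieces
  have hUc : ContinuousOn (Uml γ) (Icc 0 t₀) := U_continuousOn hγ0 hγ1 t₀ ht₀0
  have hint1 : IntervalIntegrable (fun s => (t₀-s)^(γ-1) * Uml γ s) volume 0 τs := by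
    apply (kernel_intervalIntegrable hγ0 t₀ 0 τs).mul_continuousOn
    apply hUc.mono
    rw [Set.uIcc_of_le hτs_pos.le]
    exact Icc_subset_Icc (le_refl _) hτs_lt.le
  have hint2 : IntervalIntegrable (fun s => (t₀-s)^(γ-1) * Uml γ s) volume τs t₀ := by
    apply (kernel_intervalIntegrable hγ0 t₀ τs t₀).mul_continuousOn
    apply hUc.mono
    rw [Set.uIcc_of_le hτs_lt.le]
    exact Icc_subset_Icc hτs_pos.le (le_refl _)
  have hsplit := intervalIntegral.integral_add_adjacent_intervals hint1 hint2
  -- kernel integral value on [τs, t₀]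
  have hA : ∫ s in τs..t₀, (t₀-s)^(γ-1) = (t₀-τs)^γ/γ := by
    rw [intervalIntegral.integral_comp_sub_left (fun x : ℝ => x^(γ-1)) t₀]
    rw [sub_self, integral_rpow (Or.inl (by linarith))]
    rw [Real.zero_rpow (by linarith : γ-1+1 ≠ 0)]
    norm_num
  have toIoo : ∀ {f : ℝ → ℝ} {a b : ℝ}, a ≤ b → IntervalIntegrable f volume a b →
      IntegrableOn f (Ioo a b) volume := by
    intro f a b hab h
    rw [intervalIntegrable_iff_integrableOn_Ioc_of_le hab] at h
    exact h.mono_set Ioo_subset_Ioc_self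
  -- I₂ bound
  have hI2 : ∫ s in τs..t₀, (t₀-s)^(γ-1) * Uml γ s ≤ Uml γ τs * ((t₀-τs)^γ/γ) := by
    have hle : ∫ s in τs..t₀, (t₀-s)^(γ-1) * Uml γ s
        ≤ ∫ s in τs..t₀, (t₀-s)^(γ-1) * Uml γ τs := by
      rw [intervalIntegral.integral_of_le hτs_lt.le, intervalIntegral.integral_of_le hτs_lt.le,
        MeasureTheory.integral_Ioc_eq_integral_Ioo, MeasureTheory.integral_Ioc_eq_integral_Ioo]
      apply setIntegral_mono_on (toIoo hτs_lt.le hint2)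
        (toIoo hτs_lt.le ((kernel_intervalIntegrable hγ0 t₀ τs t₀).mul_const _))
        measurableSet_Ioo
      intro s hs
      have hker : 0 ≤ (t₀-s)^(γ-1) := Real.rpow_nonneg (by linarith [hs.2]) _
      have hUle : Uml γ s ≤ Uml γ τs := hτs_max' s ⟨le_trans hτs_mem.1 hs.1.le, hs.2.le⟩
      exact mul_le_mul_of_nonneg_left hUle hker
    rw [intervalIntegral.integral_mul_const, hA] at hle
    calc ∫ s in τs..t₀, (t₀-s)^(γ-1) * Uml γ s ≤ (t₀-τs)^γ/γ * Uml γ τs := hle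
      _ = Uml γ τs * ((t₀-τs)^γ/γ) := by ring
  -- the comparison factor
  set ρ := (τs/t₀)^(1-γ) with hρdef
  have hρpos : 0 < ρ := Real.rpow_pos_of_pos (by positivity) _
  -- kernel comparison on (0, τs)
  have hker_cmp : ∀ s ∈ Ioo (0:ℝ) τs,
      (t₀-s)^(γ-1) * Uml γ s ≤ ρ * ((τs-s)^(γ-1) * Uml γ s) := by
    intro s hs
    have hs0 : 0 < s := hs.1
    have hsτ : s < τs := hs.2
    have h1 : 0 < τs - s := by linarith
    have h2 : 0 < t₀ - s := by linarith
    have key : (t₀-s)^(γ-1) ≤ ρ * (τs-s)^(γ-1) := by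
      have hbase : (τs-s)/(τs/t₀) ≤ t₀-s := by
        rw [div_div_eq_mul_div, div_le_iff₀ hτs_pos]
        nlinarith [hs0.le, hτs_lt.le]
      have h4 : ((τs-s)/(τs/t₀))^(1-γ) ≤ (t₀-s)^(1-γ) :=
        Real.rpow_le_rpow (by positivity) hbase (by linarith)
      rw [Real.div_rpow h1.le (by positivity)] at h4
      have h5 : 0 < (τs-s)^(1-γ) := Real.rpow_pos_of_pos h1 _
      have h6 : 0 < (t₀-s)^(1-γ) := Real.rpow_pos_of_pos h2 _
      have h7 : (τs-s)^(1-γ) ≤ ρ * (t₀-s)^(1-γ) := by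
        rw [div_le_iff₀ hρpos] at h4
        nlinarith [h4]
      have e1 : (t₀-s)^(γ-1) = ((t₀-s)^(1-γ))⁻¹ := by
        rw [← Real.rpow_neg h2.le]; congr 1; ring
      have e2 : (τs-s)^(γ-1) = ((τs-s)^(1-γ))⁻¹ := by
        rw [← Real.rpow_neg h1.le]; congr 1; ring
      have h8 : ((t₀-s)^(1-γ))⁻¹ * ((τs-s)^(1-γ)) ≤ ρ := by
        have h8a := mul_le_mul_of_nonneg_left h7 (inv_nonneg.mpr h6.le)
        have h8b : ((t₀-s)^(1-γ))⁻¹ * (ρ * (t₀-s)^(1-γ)) = ρ := by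
          field_simp
        linarith [h8a, h8b.le, h8b.ge]
      calc (t₀-s)^(γ-1) = ((t₀-s)^(1-γ))⁻¹ := e1
        _ = ((t₀-s)^(1-γ))⁻¹ * ((τs-s)^(1-γ)) * ((τs-s)^(1-γ))⁻¹ := by field_simp
        _ ≤ ρ * ((τs-s)^(1-γ))⁻¹ := mul_le_mul_of_nonneg_right h8 (inv_nonneg.mpr h5.le)
        _ = ρ * (τs-s)^(γ-1) := by rw [e2]
    have hU0 : 0 ≤ Uml γ s := (hpos_below s hs0.le (lt_trans hsτ hτs_lt)).le
    calc (t₀-s)^(γ-1) * Uml γ s ≤ (ρ*(τs-s)^(γ-1)) * Uml γ s :=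
          mul_le_mul_of_nonneg_right key hU0
      _ = ρ * ((τs-s)^(γ-1) * Uml γ s) := by ring
  -- I₁ bound
  have hket : IntervalIntegrable (fun s => (τs-s)^(γ-1) * Uml γ s) volume 0 τs := by
    apply (kernel_intervalIntegrable hγ0 τs 0 τs).mul_continuousOn
    apply hUc.mono
    rw [Set.uIcc_of_le hτs_pos.le]
    exact Icc_subset_Icc (le_refl _) hτs_lt.le
  have hI1 : ∫ s in (0:ℝ)..τs, (t₀-s)^(γ-1) * Uml γ s
      ≤ ρ * (Real.Gamma γ * (1 - Uml γ τs)) := by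
    have h8 : ∫ s in (0:ℝ)..τs, (t₀-s)^(γ-1) * Uml γ s
        ≤ ∫ s in (0:ℝ)..τs, ρ * ((τs-s)^(γ-1) * Uml γ s) := by
      rw [intervalIntegral.integral_of_le hτs_pos.le, intervalIntegral.integral_of_le hτs_pos.le,
        MeasureTheory.integral_Ioc_eq_integral_Ioo, MeasureTheory.integral_Ioc_eq_integral_Ioo]
      exact setIntegral_mono_on (toIoo hτs_pos.le hint1)
        (toIoo hτs_pos.le (hket.const_mul ρ)) measurableSet_Ioo hker_cmp
    rw [intervalIntegral.integral_const_mul, hVs] at h8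
    exact h8
  -- combine
  have hcomb : Real.Gamma γ
      ≤ ρ * (Real.Gamma γ * (1 - Uml γ τs)) + Uml γ τs * ((t₀-τs)^γ/γ) := by
    linarith [hI1, hI2, hsplit, hV0]
  have hρ1 : ρ ≤ 1 :=
    Real.rpow_le_one (by positivity) ((div_le_one ht₀pos).mpr hτs_lt.le) (by linarith)
  have hcancel : ρ * Real.Gamma γ ≤ (t₀-τs)^γ/γ := by
    have h14 : (ρ * Real.Gamma γ) * Uml γ τs ≤ ((t₀-τs)^γ/γ) * Uml γ τs := by
      nlinarith [hcomb, mul_le_mul_of_nonneg_right hρ1 hΓγ.le, hUτs_pos]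
    exact le_of_mul_le_mul_right h14 hUτs_pos
  have hAle : (t₀-τs)^γ/γ ≤ Real.Gamma γ/4 := by
    have h9 : t₀ - τs ≤ δ := by
      have := hτs_mem.1
      rw [hτ₀def] at this
      linarith
    have h10 : (t₀-τs)^γ ≤ δ^γ := Real.rpow_le_rpow (by linarith [hτs_lt]) h9 hγ0.le
    have h15 : (t₀-τs)^γ/γ ≤ (γ*Real.Gamma γ/4)/γ := by
      apply div_le_div_of_nonneg_right (le_trans h10 hδγ) hγ0.le
    calc (t₀-τs)^γ/γ ≤ (γ*Real.Gamma γ/4)/γ := h15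
      _ = Real.Gamma γ/4 := by field_simp
  have hρhalf : 1/2 ≤ ρ := by
    have h11 : (1:ℝ)/2 ≤ τs/t₀ := by
      rw [le_div_iff₀ ht₀pos]
      have := hτs_mem.1
      rw [hτ₀def] at this
      linarith [hδle]
    have h12 : ((1:ℝ)/2)^(1-γ) ≤ (τs/t₀)^(1-γ) :=
      Real.rpow_le_rpow (by norm_num) h11 (by linarith)
    have h13 : ((1:ℝ)/2)^((1:ℝ)) ≤ ((1:ℝ)/2)^(1-γ) :=
      Real.rpow_le_rpow_of_exponent_ge (by norm_num) (by norm_num) (by linarith)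
    rw [Real.rpow_one] at h13
    exact le_trans h13 h12
  nlinarith [hcancel, hAle, hρhalf, hΓγ]

/-- For `γ ∈ (0,1)`, the Mittag-Leffler function satisfies
`E_γ(−x) > 0` for every `x ≥ 0`. -/
theorem mittagLeffler_neg_pos
    (γ : ℝ) (hγ : γ ∈ Set.Ioo (0:ℝ) 1) :
    ∀ x : ℝ, 0 ≤ x → 0 < mittagLeffler γ (-x) := by
  obtain ⟨hγ0, hγ1⟩ := hγ
  intro x hx
  set t := x ^ γ⁻¹ with htdef
  have ht0 : 0 ≤ t := Real.rpow_nonneg hx _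
  have htγ : t ^ γ = x := Real.rpow_inv_rpow hx hγ0.ne'
  calc (0:ℝ) < Uml γ t := U_pos hγ0 hγ1 t ht0
    _ = mittagLeffler γ (-(t^γ)) := (U_eq_ml ht0).symm
    _ = mittagLeffler γ (-x) := by rw [htγ]
end

section
/- Let γ ∈ (0,1). Let f : [0,∞) × ℝ → ℝ be measurable and locally bounded, and assume that for every T, M > 0 there is L > 0 such that |f(t,x) − f(t,y)| ≤ L|x − y| for a.e. t ∈ [0,T] and all x, y ∈ [−M,M]. Then for every T > 0 and M > 0 there exists a constant C = C(M,T) > 0 such that: whenever u₁, u₂ are continuous on [0,T] with sup_{[0,T]}|uᵢ| ≤ M and uᵢ(t) = uᵢ(0) + (1/Γ(γ)) ∫₀ᵗ (t−s)^(γ−1) f(s, uᵢ(s)) ds for all t ∈ [0,T] (i = 1,2), one has sup_{t∈[0,T]} |u₁(t) − u₂(t)| ≤ C |u₁(0) − u₂(0)|. -/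
/-!
Subtracting the two integral equations and using the Lipschitz bound, `w = |u₁ - u₂|` satisfies
`w t ≤ δ + (L / Γ(γ)) ∫₀ᵗ (t - s)^(γ-1) w s ds` with `δ = |u₁ 0 - u₂ 0|`. This fractional
Gronwall inequality is closed with a Bielecki-type weight: for `m = max_{[0,T]} e^{-rt} w t`,
the bound `∫₀ᵗ (t - s)^(γ-1) e^{rs} ds ≤ e^{rt} Γ(γ) r^{-γ}` gives `m ≤ δ + L r^{-γ} m`,
hence `m ≤ 2δ` as soon as `r^γ ≥ 2L`, and `C = 2 e^{rT}` works.
-/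

open MeasureTheory Set Filter Real

theorem intervalIntegrable_sub_rpow {γ : ℝ} (hγ : 0 < γ) (t a b : ℝ) :
    IntervalIntegrable (fun s => (t - s) ^ (γ - 1)) volume a b := by
  simpa using (intervalIntegral.intervalIntegrable_rpow' (a := t - a) (b := t - b)
    (r := γ - 1) (by linarith)).comp_sub_left t

theorem intervalIntegrable_sub_rpow_mul_of_continuousOn {γ t T : ℝ} (hγ : 0 < γ) {g : ℝ → ℝ}
    (hg : ContinuousOn g (Icc 0 T)) (ht : t ∈ Icc 0 T) :
    IntervalIntegrable (fun s => (t - s) ^ (γ - 1) * g s) volume 0 t :=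
  (intervalIntegrable_sub_rpow hγ t 0 t).mul_continuousOn
    (hg.mono (by rw [uIcc_of_le ht.1]; exact Icc_subset_Icc le_rfl ht.2))

theorem intervalIntegrable_sub_rpow_mul_of_abs_le {γ t T B : ℝ} (hγ : 0 < γ) {g : ℝ → ℝ}
    (hg : AEStronglyMeasurable g (volume.restrict (Icc 0 T)))
    (hB : ∀ s ∈ Icc 0 T, |g s| ≤ B) (ht : t ∈ Icc 0 T) :
    IntervalIntegrable (fun s => (t - s) ^ (γ - 1) * g s) volume 0 t := by
  have hsub : uIoc 0 t ⊆ Icc 0 T := by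
    rw [uIoc_of_le ht.1]; exact Ioc_subset_Icc_self.trans (Icc_subset_Icc le_rfl ht.2)
  refine intervalIntegrable_iff.2 (Integrable.mul_bdd (c := B)
    (intervalIntegrable_iff.1 (intervalIntegrable_sub_rpow hγ t 0 t))
    (hg.mono_measure (Measure.restrict_mono hsub le_rfl)) ?_)
  exact ae_restrict_of_forall_mem measurableSet_uIoc fun s hs => hB s (hsub hs)

theorem intervalIntegrable_sub_rpow_mul_comp {γ t T M B : ℝ} (hγ : 0 < γ) {f : ℝ → ℝ → ℝ}
    {u : ℝ → ℝ} (hf : Measurable (Function.uncurry f))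
    (hB : ∀ t ∈ Icc 0 T, ∀ x ∈ Icc (-M) M, |f t x| ≤ B) (hu : ContinuousOn u (Icc 0 T))
    (huM : ∀ t ∈ Icc 0 T, |u t| ≤ M) (ht : t ∈ Icc 0 T) :
    IntervalIntegrable (fun s => (t - s) ^ (γ - 1) * f s (u s)) volume 0 t :=
  intervalIntegrable_sub_rpow_mul_of_abs_le hγ
    (hf.comp_aemeasurable
      (aemeasurable_id.prodMk (hu.aemeasurable measurableSet_Icc))).aestronglyMeasurable
    (fun s hs => hB s hs _ (abs_le.1 (huM s hs))) ht

theorem integral_sub_rpow_mul_exp_le {γ r t : ℝ} (hγ : 0 < γ) (hr : 0 < r) (ht : 0 ≤ t) :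
    ∫ s in (0:ℝ)..t, (t - s) ^ (γ - 1) * exp (r * s) ≤ exp (r * t) * (Gamma γ / r ^ γ) := by
  have hIoi : ∫ s in Ioi 0, s ^ (γ - 1) * exp (-(r * s)) = Gamma γ / r ^ γ := by
    rw [integral_rpow_mul_exp_neg_mul_Ioi hγ hr, one_div, inv_rpow hr.le, inv_mul_eq_div]
  have hsubst : ∫ s in (0:ℝ)..t, (t - s) ^ (γ - 1) * exp (r * s)
      = exp (r * t) * ∫ s in (0:ℝ)..t, s ^ (γ - 1) * exp (-(r * s)) := by
    calc _ = ∫ s in (0:ℝ)..t, s ^ (γ - 1) * exp (r * (t - s)) := by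
          simpa using intervalIntegral.integral_comp_sub_left (a := 0) (b := t)
            (fun s => s ^ (γ - 1) * exp (r * (t - s))) t
      _ = ∫ s in (0:ℝ)..t, exp (r * t) * (s ^ (γ - 1) * exp (-(r * s))) := by
          congr 1; ext s; rw [mul_sub, sub_eq_add_neg (r * t), exp_add]; ring
      _ = _ := intervalIntegral.integral_const_mul _ _
  rw [hsubst, ← hIoi, intervalIntegral.integral_of_le ht]
  gcongr
  · filter_upwards [ae_restrict_mem measurableSet_Ioi] with s hs
    exact mul_nonneg (rpow_nonneg (le_of_lt hs) _) (exp_pos _).le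
  · exact Integrable.of_integral_ne_zero (by rw [hIoi]; positivity)
  · exact Ioc_subset_Ioi_self

theorem integral_sub_rpow_mul_le_of_le_exp_mul {γ r t m : ℝ} (hγ : 0 < γ) (hr : 0 < r)
    {w : ℝ → ℝ} (hw : ContinuousOn w (Icc 0 t)) (ht : 0 ≤ t) (hm : 0 ≤ m)
    (hwm : ∀ s ∈ Icc 0 t, w s ≤ exp (r * s) * m) :
    ∫ s in (0:ℝ)..t, (t - s) ^ (γ - 1) * w s ≤ m * (exp (r * t) * (Gamma γ / r ^ γ)) :=
  calc ∫ s in (0:ℝ)..t, (t - s) ^ (γ - 1) * w s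
      ≤ ∫ s in (0:ℝ)..t, (t - s) ^ (γ - 1) * (exp (r * s) * m) :=
        intervalIntegral.integral_mono_on ht
          (intervalIntegrable_sub_rpow_mul_of_continuousOn hγ hw ⟨ht, le_rfl⟩)
          (intervalIntegrable_sub_rpow_mul_of_continuousOn hγ (by fun_prop) ⟨ht, le_rfl⟩)
          fun s hs => mul_le_mul_of_nonneg_left (hwm s hs) (rpow_nonneg (sub_nonneg.2 hs.2) _)
    _ = m * ∫ s in (0:ℝ)..t, (t - s) ^ (γ - 1) * exp (r * s) := by
        simp_rw [← mul_assoc]; rw [intervalIntegral.integral_mul_const, mul_comm]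
    _ ≤ m * (exp (r * t) * (Gamma γ / r ^ γ)) := by
        gcongr; exact integral_sub_rpow_mul_exp_le hγ hr ht

theorem le_two_mul_exp_mul_of_le_add_integral_sub_rpow_mul {γ K δ r T : ℝ} (hγ : 0 < γ)
    (hK : 0 ≤ K) (hr : 0 < r) (hKr : 2 * K * Gamma γ ≤ r ^ γ) (hδ : 0 ≤ δ) {w : ℝ → ℝ}
    (hw : ContinuousOn w (Icc 0 T)) (hw0 : ∀ t ∈ Icc 0 T, 0 ≤ w t)
    (hwle : ∀ t ∈ Icc 0 T, w t ≤ δ + K * ∫ s in (0:ℝ)..t, (t - s) ^ (γ - 1) * w s) :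
    ∀ t ∈ Icc 0 T, w t ≤ 2 * exp (r * t) * δ := by
  intro t ht
  set φ : ℝ → ℝ := fun s => exp (-(r * s)) * w s with hφ
  obtain ⟨c, hc, hcmax⟩ := isCompact_Icc.exists_isMaxOn (nonempty_Icc.2 (ht.1.trans ht.2))
    (show ContinuousOn φ (Icc 0 T) by fun_prop)
  have hφc : 0 ≤ φ c := mul_nonneg (exp_pos _).le (hw0 c hc)
  have hw_le : ∀ s ∈ Icc 0 T, w s ≤ exp (r * s) * φ c := fun s hs =>
    calc w s = exp (r * s) * φ s := by
          rw [hφ, ← mul_assoc, ← exp_add, add_neg_cancel, exp_zero, one_mul]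
      _ ≤ exp (r * s) * φ c := by gcongr; exact hcmax hs
  have hint := integral_sub_rpow_mul_le_of_le_exp_mul hγ hr (hw.mono (Icc_subset_Icc le_rfl hc.2))
    hc.1 hφc fun s hs => hw_le s ⟨hs.1, hs.2.trans hc.2⟩
  have hφc_le : φ c ≤ 2 * δ := by
    have hKr' : K * (Gamma γ / r ^ γ) ≤ 1 / 2 := by
      rw [mul_div_assoc', div_le_iff₀ (by positivity)]; linarith
    have : φ c ≤ δ + φ c / 2 :=
      calc φ c ≤ exp (-(r * c)) * (δ + K * (φ c * (exp (r * c) * (Gamma γ / r ^ γ)))) := by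
            show exp (-(r * c)) * w c ≤ _
            gcongr; exact (hwle c hc).trans (by gcongr)
        _ = exp (-(r * c)) * δ + φ c * (K * (Gamma γ / r ^ γ)) := by
            rw [mul_add, exp_neg]; field_simp
        _ ≤ δ + φ c / 2 := by
            refine add_le_add (mul_le_of_le_one_left hδ (exp_le_one_iff.2 ?_)) ?_
            · nlinarith [hc.1]
            · linarith [mul_le_mul_of_nonneg_left hKr' hφc]
    linarith
  calc w t ≤ exp (r * t) * φ c := hw_le t ht
    _ ≤ exp (r * t) * (2 * δ) := by gcongr
    _ = 2 * exp (r * t) * δ := by ring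

theorem abs_sub_le_add_mul_integral_of_lipschitz {u₁ u₂ g₁ g₂ k : ℝ → ℝ} {c L t : ℝ}
    (hc : 0 ≤ c) (ht : 0 ≤ t) (hk : ∀ s ∈ Ioc 0 t, 0 ≤ k s)
    (h₁ : u₁ t = u₁ 0 + c * ∫ s in (0:ℝ)..t, k s * g₁ s)
    (h₂ : u₂ t = u₂ 0 + c * ∫ s in (0:ℝ)..t, k s * g₂ s)
    (hi₁ : IntervalIntegrable (fun s => k s * g₁ s) volume 0 t)
    (hi₂ : IntervalIntegrable (fun s => k s * g₂ s) volume 0 t)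
    (hiu : IntervalIntegrable (fun s => k s * |u₁ s - u₂ s|) volume 0 t)
    (hlip : ∀ᵐ s ∂volume.restrict (Ioc 0 t), |g₁ s - g₂ s| ≤ L * |u₁ s - u₂ s|) :
    |u₁ t - u₂ t| ≤ |u₁ 0 - u₂ 0| + c * L * ∫ s in (0:ℝ)..t, k s * |u₁ s - u₂ s| := by
  have hdiff : u₁ t - u₂ t = (u₁ 0 - u₂ 0) + c * ∫ s in (0:ℝ)..t, k s * (g₁ s - g₂ s) := by
    simp_rw [mul_sub]
    rw [h₁, h₂, intervalIntegral.integral_sub hi₁ hi₂]; ring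
  have hint : |∫ s in (0:ℝ)..t, k s * (g₁ s - g₂ s)|
      ≤ L * ∫ s in (0:ℝ)..t, k s * |u₁ s - u₂ s| := by
    rw [← intervalIntegral.integral_const_mul, ← Real.norm_eq_abs]
    refine intervalIntegral.norm_integral_le_of_norm_le ht ?_ (hiu.const_mul L)
    filter_upwards [(ae_restrict_iff' measurableSet_Ioc).1 hlip] with s hs hsmem
    rw [Real.norm_eq_abs, abs_mul, abs_of_nonneg (hk s hsmem), mul_left_comm]
    exact mul_le_mul_of_nonneg_left (hs hsmem) (hk s hsmem)
  calc |u₁ t - u₂ t| ≤ |u₁ 0 - u₂ 0| + |c * ∫ s in (0:ℝ)..t, k s * (g₁ s - g₂ s)| :=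
        hdiff ▸ abs_add_le _ _
    _ ≤ |u₁ 0 - u₂ 0| + c * L * ∫ s in (0:ℝ)..t, k s * |u₁ s - u₂ s| := by
        rw [abs_mul, abs_of_nonneg hc, mul_assoc]; gcongr

/-- Stability of solutions in the initial value: for every `T, M > 0`
there is `C = C(M,T) > 0` such that any two solutions bounded by `M` on `[0,T]` satisfy
`sup_{[0,T]} |u₁ − u₂| ≤ C |u₁(0) − u₂(0)|`. -/
theorem fractional_ode_stability_in_initial_value
    (γ : ℝ) (hγ : γ ∈ Set.Ioo (0:ℝ) 1)
    (f : ℝ → ℝ → ℝ)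
    (hf_meas : Measurable (Function.uncurry f))
    (hf_bdd : ∀ T > (0:ℝ), ∀ M > (0:ℝ), ∃ C : ℝ,
      ∀ t ∈ Set.Icc 0 T, ∀ x ∈ Set.Icc (-M) M, |f t x| ≤ C)
    (hf_lip : ∀ T > (0:ℝ), ∀ M > (0:ℝ), ∃ L > (0:ℝ),
      ∀ᵐ t ∂volume.restrict (Set.Icc (0:ℝ) T),
        ∀ x ∈ Set.Icc (-M) M, ∀ y ∈ Set.Icc (-M) M, |f t x - f t y| ≤ L * |x - y|) :
    ∀ T > (0:ℝ), ∀ M > (0:ℝ), ∃ C > (0:ℝ),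
      ∀ u₁ u₂ : ℝ → ℝ,
        ContinuousOn u₁ (Set.Icc 0 T) → ContinuousOn u₂ (Set.Icc 0 T) →
        (∀ t ∈ Set.Icc 0 T, |u₁ t| ≤ M) → (∀ t ∈ Set.Icc 0 T, |u₂ t| ≤ M) →
        (∀ t ∈ Set.Icc 0 T,
          u₁ t = u₁ 0 + (1 / Real.Gamma γ) *
            ∫ s in (0:ℝ)..t, (t - s) ^ (γ - 1) * f s (u₁ s)) →
        (∀ t ∈ Set.Icc 0 T,
          u₂ t = u₂ 0 + (1 / Real.Gamma γ) *
            ∫ s in (0:ℝ)..t, (t - s) ^ (γ - 1) * f s (u₂ s)) →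
        ∀ t ∈ Set.Icc 0 T, |u₁ t - u₂ t| ≤ C * |u₁ 0 - u₂ 0| := by
  intro T hT M hM
  obtain ⟨L, hL, hlip⟩ := hf_lip T hT M hM
  obtain ⟨B, hB⟩ := hf_bdd T hT M hM
  have hΓ : 0 < Gamma γ := Gamma_pos_of_pos hγ.1
  set r := (2 * L) ^ γ⁻¹
  have hr : 2 * (1 / Gamma γ * L) * Gamma γ ≤ r ^ γ := by
    rw [← rpow_mul (by positivity), inv_mul_cancel₀ hγ.1.ne', rpow_one]
    rw [one_div_mul_eq_div, mul_assoc, div_mul_cancel₀ _ hΓ.ne']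
  refine ⟨2 * exp (r * T), by positivity, fun u₁ u₂ hc₁ hc₂ hb₁ hb₂ hu₁ hu₂ t ht => ?_⟩
  have hlip_sol : ∀ᵐ s ∂volume.restrict (Icc 0 T),
      |f s (u₁ s) - f s (u₂ s)| ≤ L * |u₁ s - u₂ s| := by
    filter_upwards [hlip, ae_restrict_mem measurableSet_Icc] with s hs hsT
    exact hs _ (abs_le.1 (hb₁ s hsT)) _ (abs_le.1 (hb₂ s hsT))
  have hw : ContinuousOn (fun s => |u₁ s - u₂ s|) (Icc 0 T) := (hc₁.sub hc₂).abs
  have hw_le : ∀ t ∈ Icc 0 T, |u₁ t - u₂ t| ≤ |u₁ 0 - u₂ 0| +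
      1 / Gamma γ * L * ∫ s in (0:ℝ)..t, (t - s) ^ (γ - 1) * |u₁ s - u₂ s| := fun t ht =>
    abs_sub_le_add_mul_integral_of_lipschitz (k := fun s => (t - s) ^ (γ - 1)) (by positivity)
      ht.1 (fun s hs => rpow_nonneg (sub_nonneg.2 hs.2) _) (hu₁ t ht) (hu₂ t ht)
      (intervalIntegrable_sub_rpow_mul_comp hγ.1 hf_meas hB hc₁ hb₁ ht)
      (intervalIntegrable_sub_rpow_mul_comp hγ.1 hf_meas hB hc₂ hb₂ ht)
      (intervalIntegrable_sub_rpow_mul_of_continuousOn hγ.1 hw ht)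
      (ae_restrict_of_ae_restrict_of_subset
        (Ioc_subset_Icc_self.trans (Icc_subset_Icc le_rfl ht.2)) hlip_sol)
  calc |u₁ t - u₂ t| ≤ 2 * exp (r * t) * |u₁ 0 - u₂ 0| :=
        le_two_mul_exp_mul_of_le_add_integral_sub_rpow_mul hγ.1 (by positivity) (by positivity)
          hr (abs_nonneg _) hw (fun _ _ => abs_nonneg _) hw_le t ht
    _ ≤ 2 * exp (r * T) * |u₁ 0 - u₂ 0| := by gcongr; exact ht.2
end

section
/- Let γ ∈ (0,1) and T > 0. Let f : [0,∞) × ℝ → ℝ be measurable and locally bounded, and assume that for every M > 0 there is L > 0 such that |f(t,x) − f(t,y)| ≤ L|x − y| for a.e. t ∈ [0,T] and all x, y ∈ [−M,M]. If u₁, u₂ are continuous on [0,T], satisfy uᵢ(t) = uᵢ(0) + (1/Γ(γ)) ∫₀ᵗ (t−s)^(γ−1) f(s, uᵢ(s)) ds for all t ∈ [0,T] (i = 1,2), and u₁(0) = u₂(0), then u₁(t) = u₂(t) for all t ∈ [0,T]. -/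
open MeasureTheory Set Filter

lemma aux_int (γ t C : ℝ) (hγ0 : 0 < γ) (hγ1 : γ < 1) (ht : 0 ≤ t)
    (g : ℝ → ℝ) (hg : AEMeasurable g (volume.restrict (Set.Ioc 0 t)))
    (hgC : ∀ s ∈ Set.Ioc 0 t, |g s| ≤ C) :
    IntervalIntegrable (fun s => (t - s) ^ (γ - 1) * g s) volume 0 t := by
  have hI : Set.uIoc (0:ℝ) t = Set.Ioc 0 t := uIoc_of_le ht
  have hrpow : IntervalIntegrable (fun s => (t - s) ^ (γ - 1)) volume 0 t := by
    have := ((intervalIntegral.intervalIntegrable_rpow' (a := 0) (b := t)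
      (r := γ - 1) (by linarith)).comp_sub_left t).symm
    simpa using this
  have hdom : IntervalIntegrable (fun s => (t - s) ^ (γ - 1) * |C|) volume 0 t :=
    hrpow.mul_const _
  have hm : Measurable fun s : ℝ => (t - s) ^ (γ - 1) := by fun_prop
  apply hdom.mono_fun
  · rw [hI]; exact (hm.aemeasurable.mul hg).aestronglyMeasurable
  · rw [hI]
    filter_upwards [ae_restrict_mem measurableSet_Ioc] with s hs
    have h1 : (0:ℝ) ≤ (t - s) ^ (γ - 1) := Real.rpow_nonneg (by linarith [hs.2]) _
    have h2 := hgC s hs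
    have h3 : (0:ℝ) ≤ (t - s) ^ (γ - 1) * |C| := by positivity
    simp only [Real.norm_eq_abs, abs_mul, abs_of_nonneg h1, abs_abs]
    nlinarith [abs_nonneg (g s), le_abs_self C]

lemma aux_val (γ a t : ℝ) (hγ0 : 0 < γ) (hat : a ≤ t) :
    ∫ s in a..t, (t - s) ^ (γ - 1) = (t - a) ^ γ / γ := by
  rw [intervalIntegral.integral_comp_sub_left (fun x => x ^ (γ - 1)) t]
  rw [sub_self, integral_rpow (Or.inl (by linarith))]
  rw [Real.zero_rpow (by linarith : γ - 1 + 1 ≠ 0)]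
  ring_nf

/-- Uniqueness of solutions of the fractional ODE: two continuous
solutions on `[0,T]` with the same initial value coincide. -/
theorem fractional_ode_uniqueness
    (γ T : ℝ) (hγ : γ ∈ Set.Ioo (0:ℝ) 1) (hT : 0 < T)
    (f : ℝ → ℝ → ℝ)
    (hf_meas : Measurable (Function.uncurry f))
    (hf_bdd : ∀ T' > (0:ℝ), ∀ M > (0:ℝ), ∃ C : ℝ,
      ∀ t ∈ Set.Icc 0 T', ∀ x ∈ Set.Icc (-M) M, |f t x| ≤ C)
    (hf_lip : ∀ M > (0:ℝ), ∃ L > (0:ℝ),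
      ∀ᵐ t ∂volume.restrict (Set.Icc (0:ℝ) T),
        ∀ x ∈ Set.Icc (-M) M, ∀ y ∈ Set.Icc (-M) M, |f t x - f t y| ≤ L * |x - y|)
    (u₁ u₂ : ℝ → ℝ)
    (hc1 : ContinuousOn u₁ (Set.Icc 0 T)) (hc2 : ContinuousOn u₂ (Set.Icc 0 T))
    (he1 : ∀ t ∈ Set.Icc 0 T,
      u₁ t = u₁ 0 + (1 / Real.Gamma γ) * ∫ s in (0:ℝ)..t, (t - s) ^ (γ - 1) * f s (u₁ s))
    (he2 : ∀ t ∈ Set.Icc 0 T,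
      u₂ t = u₂ 0 + (1 / Real.Gamma γ) * ∫ s in (0:ℝ)..t, (t - s) ^ (γ - 1) * f s (u₂ s))
    (h0 : u₁ 0 = u₂ 0) :
    ∀ t ∈ Set.Icc 0 T, u₁ t = u₂ t := by
  obtain ⟨hγ0, hγ1⟩ := hγ
  have hΓ : 0 < Real.Gamma γ := Real.Gamma_pos_of_pos hγ0
  -- bound on u₁, u₂
  obtain ⟨M₁, hM₁⟩ := isCompact_Icc.exists_bound_of_continuousOn hc1
  obtain ⟨M₂, hM₂⟩ := isCompact_Icc.exists_bound_of_continuousOn hc2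
  set M : ℝ := |M₁| + |M₂| + 1 with hMdef
  have hM : 0 < M := by positivity
  have hu₁M : ∀ s ∈ Set.Icc 0 T, u₁ s ∈ Set.Icc (-M) M := by
    intro s hs
    have h := hM₁ s hs
    rw [Real.norm_eq_abs] at h
    exact Set.mem_Icc.2 (abs_le.1 (h.trans (by
      rw [hMdef]; nlinarith [le_abs_self M₁, abs_nonneg M₂])))
  have hu₂M : ∀ s ∈ Set.Icc 0 T, u₂ s ∈ Set.Icc (-M) M := by
    intro s hs
    have h := hM₂ s hs
    rw [Real.norm_eq_abs] at h
    exact Set.mem_Icc.2 (abs_le.1 (h.trans (by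
      rw [hMdef]; nlinarith [le_abs_self M₂, abs_nonneg M₁])))
  obtain ⟨L, hL0, hLip⟩ := hf_lip M hM
  obtain ⟨C, hC⟩ := hf_bdd T hT M hM
  -- integrability
  have hint : ∀ t ∈ Set.Icc (0:ℝ) T, ∀ u : ℝ → ℝ, ContinuousOn u (Set.Icc 0 T) →
      (∀ s ∈ Set.Icc 0 T, u s ∈ Set.Icc (-M) M) →
      IntervalIntegrable (fun s => (t - s) ^ (γ - 1) * f s (u s)) volume 0 t := by
    intro t ht u hu huM
    have hsub : Set.Ioc (0:ℝ) t ⊆ Set.Icc 0 T :=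
      (Set.Ioc_subset_Icc_self).trans (Set.Icc_subset_Icc le_rfl ht.2)
    have hum : AEMeasurable u (volume.restrict (Set.Ioc 0 t)) :=
      (hu.mono hsub).aemeasurable measurableSet_Ioc
    have hfm : AEMeasurable (fun s => f s (u s)) (volume.restrict (Set.Ioc 0 t)) :=
      hf_meas.comp_aemeasurable (aemeasurable_id.prodMk hum)
    exact aux_int γ t C hγ0 hγ1 ht.1 _ hfm
      (fun s hs => hC s (hsub hs) (u s) (huM s (hsub hs)))
  -- difference identity
  have hdiff : ∀ t ∈ Set.Icc (0:ℝ) T,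
      u₁ t - u₂ t = (1 / Real.Gamma γ) *
        ∫ s in (0:ℝ)..t, (t - s) ^ (γ - 1) * (f s (u₁ s) - f s (u₂ s)) := by
    intro t ht
    have h1 := hint t ht u₁ hc1 hu₁M
    have h2 := hint t ht u₂ hc2 hu₂M
    have e : (fun s => (t - s) ^ (γ - 1) * (f s (u₁ s) - f s (u₂ s)))
        = fun s => (t - s) ^ (γ - 1) * f s (u₁ s) - (t - s) ^ (γ - 1) * f s (u₂ s) := by
      funext s; ring
    rw [e, intervalIntegral.integral_sub h1 h2, he1 t ht, he2 t ht, h0]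
    ring
  -- key contraction step
  have key : ∀ a ∈ Set.Icc (0:ℝ) T, ∀ b ∈ Set.Icc a T,
      L / Real.Gamma γ * ((b - a) ^ γ / γ) ≤ 1 / 2 →
      (∀ s ∈ Set.Icc 0 a, u₁ s = u₂ s) → ∀ s ∈ Set.Icc (0:ℝ) b, u₁ s = u₂ s := by
    intro a ha b hb hsmall hzero
    have hab : a ≤ b := hb.1
    set w : ℝ → ℝ := fun s => |u₁ s - u₂ s| with hwdef
    have hwc : ContinuousOn w (Set.Icc a b) :=
      ((hc1.sub hc2).abs).mono (Set.Icc_subset_Icc ha.1 hb.2)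
    obtain ⟨s₀, hs₀mem, hs₀max⟩ := isCompact_Icc.exists_isMaxOn (Set.nonempty_Icc.2 hab) hwc
    have hmax : ∀ x ∈ Set.Icc a b, w x ≤ w s₀ := fun x hx => hs₀max hx
    suffices hws : w s₀ = 0 by
      intro s hs
      rcases le_or_gt s a with h | h
      · exact hzero s ⟨hs.1, h⟩
      · have h1 : w s ≤ 0 := hws ▸ hmax s ⟨h.le, hs.2⟩
        have : w s = 0 := le_antisymm h1 (abs_nonneg _)
        exact sub_eq_zero.1 (abs_eq_zero.1 this)
    -- estimate at s₀
    have hs₀T : s₀ ∈ Set.Icc (0:ℝ) T := ⟨ha.1.trans hs₀mem.1, hs₀mem.2.trans hb.2⟩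
    have has₀ : a ≤ s₀ := hs₀mem.1
    have h0s₀ : (0:ℝ) ≤ s₀ := hs₀T.1
    set G : ℝ → ℝ := fun s => (s₀ - s) ^ (γ - 1) * (f s (u₁ s) - f s (u₂ s)) with hGdef
    have hG : IntervalIntegrable G volume 0 s₀ := by
      have h1 := hint s₀ hs₀T u₁ hc1 hu₁M
      have h2 := hint s₀ hs₀T u₂ hc2 hu₂M
      have := h1.sub h2
      simpa [hGdef, mul_sub] using this
    have hGabs : IntervalIntegrable (fun s => |G s|) volume 0 s₀ := hG.abs
    have step1 : w s₀ ≤ (1 / Real.Gamma γ) * ∫ s in (0:ℝ)..s₀, |G s| := by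
      have := hdiff s₀ hs₀T
      have habs := intervalIntegral.abs_integral_le_integral_abs (f := G) (μ := volume) h0s₀
      calc w s₀ = |(1 / Real.Gamma γ) * ∫ s in (0:ℝ)..s₀, G s| := by
            show |u₁ s₀ - u₂ s₀| = _
            rw [this]
        _ = (1 / Real.Gamma γ) * |∫ s in (0:ℝ)..s₀, G s| := by
            rw [abs_mul, abs_of_nonneg (by positivity)]
        _ ≤ (1 / Real.Gamma γ) * ∫ s in (0:ℝ)..s₀, |G s| := by
            apply mul_le_mul_of_nonneg_left habs (by positivity)
    -- split the integral
    have hGa : IntervalIntegrable (fun s => |G s|) volume 0 a :=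
      hGabs.mono_set (by rw [uIcc_of_le ha.1, uIcc_of_le h0s₀]; exact Set.Icc_subset_Icc le_rfl has₀)
    have hGas : IntervalIntegrable (fun s => |G s|) volume a s₀ :=
      hGabs.mono_set (by rw [uIcc_of_le has₀, uIcc_of_le h0s₀]; exact Set.Icc_subset_Icc ha.1 le_rfl)
    have hsplit : (∫ s in (0:ℝ)..s₀, |G s|) = (∫ s in (0:ℝ)..a, |G s|) + ∫ s in a..s₀, |G s| :=
      (intervalIntegral.integral_add_adjacent_intervals hGa hGas).symm
    have hzero' : (∫ s in (0:ℝ)..a, |G s|) = 0 := by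
      rw [intervalIntegral.integral_congr (g := fun _ => (0:ℝ))
        (fun s hs => by
          rw [uIcc_of_le ha.1] at hs
          simp [hGdef, hzero s hs])]
      simp
    -- bound on [a, s₀]
    have hbnd : (∫ s in a..s₀, |G s|) ≤ ∫ s in a..s₀, (s₀ - s) ^ (γ - 1) * (L * w s₀) := by
      have hrhs : IntervalIntegrable (fun s => (s₀ - s) ^ (γ - 1) * (L * w s₀)) volume a s₀ := by
        have hrpow : IntervalIntegrable (fun s => (s₀ - s) ^ (γ - 1)) volume a s₀ := by
          have := (intervalIntegral.intervalIntegrable_rpow' (a := s₀ - a) (b := 0)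
            (r := γ - 1) (by linarith)).comp_sub_left s₀
          simpa using this
        exact hrpow.mul_const _
      apply intervalIntegral.integral_mono_ae_restrict has₀ hGas hrhs
      have hlip' := ae_restrict_of_ae_restrict_of_subset
        (Set.Icc_subset_Icc ha.1 (hs₀mem.2.trans hb.2)) hLip
      filter_upwards [hlip', ae_restrict_mem measurableSet_Icc] with s hlip hs
      have hsT : s ∈ Set.Icc (0:ℝ) T := ⟨ha.1.trans hs.1, hs.2.trans (hs₀mem.2.trans hb.2)⟩
      have hr0 : (0:ℝ) ≤ (s₀ - s) ^ (γ - 1) := Real.rpow_nonneg (by linarith [hs.2]) _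
      have hl := hlip (u₁ s) (hu₁M s hsT) (u₂ s) (hu₂M s hsT)
      have hwle : w s ≤ w s₀ := hmax s ⟨hs.1, hs.2.trans hs₀mem.2⟩
      calc |G s| = (s₀ - s) ^ (γ - 1) * |f s (u₁ s) - f s (u₂ s)| := by
            rw [hGdef]; rw [abs_mul, abs_of_nonneg hr0]
        _ ≤ (s₀ - s) ^ (γ - 1) * (L * w s₀) := by
            apply mul_le_mul_of_nonneg_left _ hr0
            calc |f s (u₁ s) - f s (u₂ s)| ≤ L * |u₁ s - u₂ s| := hl
              _ ≤ L * w s₀ := mul_le_mul_of_nonneg_left hwle hL0.le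
    have hval : (∫ s in a..s₀, (s₀ - s) ^ (γ - 1) * (L * w s₀))
        = (s₀ - a) ^ γ / γ * (L * w s₀) := by
      rw [intervalIntegral.integral_mul_const, aux_val γ a s₀ hγ0 has₀]
    -- conclude
    have hrle : (s₀ - a) ^ γ ≤ (b - a) ^ γ :=
      Real.rpow_le_rpow (by linarith) (by linarith [hs₀mem.2]) hγ0.le
    have hw0 : 0 ≤ w s₀ := abs_nonneg _
    have final : w s₀ ≤ 1 / 2 * w s₀ := by
      have h1 : w s₀ ≤ (1 / Real.Gamma γ) * ((s₀ - a) ^ γ / γ * (L * w s₀)) := by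
        calc w s₀ ≤ (1 / Real.Gamma γ) * ∫ s in (0:ℝ)..s₀, |G s| := step1
          _ = (1 / Real.Gamma γ) * ∫ s in a..s₀, |G s| := by rw [hsplit, hzero', zero_add]
          _ ≤ (1 / Real.Gamma γ) * ((s₀ - a) ^ γ / γ * (L * w s₀)) := by
              apply mul_le_mul_of_nonneg_left (hbnd.trans_eq hval) (by positivity)
      have h2 : (1 / Real.Gamma γ) * ((s₀ - a) ^ γ / γ * (L * w s₀))
          ≤ (1 / Real.Gamma γ) * ((b - a) ^ γ / γ * (L * w s₀)) := by
        gcongr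
      have h3 : (1 / Real.Gamma γ) * ((b - a) ^ γ / γ * (L * w s₀))
          = (L / Real.Gamma γ * ((b - a) ^ γ / γ)) * w s₀ := by ring
      have h4 : (L / Real.Gamma γ * ((b - a) ^ γ / γ)) * w s₀ ≤ 1 / 2 * w s₀ :=
        mul_le_mul_of_nonneg_right hsmall hw0
      linarith
    linarith
  -- iteration
  set ε : ℝ := γ * Real.Gamma γ / (2 * L) with hεdef
  have hε : 0 < ε := by positivity
  set δ : ℝ := ε ^ (1 / γ) with hδdef
  have hδ : 0 < δ := Real.rpow_pos_of_pos hε _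
  have hδγ : δ ^ γ = ε := by
    rw [hδdef, ← Real.rpow_mul hε.le, one_div, inv_mul_cancel₀ hγ0.ne', Real.rpow_one]
  have hstep : ∀ c : ℝ, 0 ≤ c → c ≤ δ → L / Real.Gamma γ * (c ^ γ / γ) ≤ 1 / 2 := by
    intro c hc0 hcδ
    have h1 : c ^ γ ≤ δ ^ γ := Real.rpow_le_rpow hc0 hcδ hγ0.le
    rw [hδγ, hεdef] at h1
    calc L / Real.Gamma γ * (c ^ γ / γ) = (L / Real.Gamma γ * c ^ γ) / γ := by ring
      _ ≤ (L / Real.Gamma γ * (γ * Real.Gamma γ / (2 * L))) / γ := by gcongr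
      _ = 1 / 2 := by
          field_simp
  have main : ∀ n : ℕ, ∀ s ∈ Set.Icc (0:ℝ) (min (n * δ) T), u₁ s = u₂ s := by
    intro n
    induction n with
    | zero =>
      intro s hs
      simp only [Nat.cast_zero, zero_mul, min_eq_left hT.le] at hs
      have : s = 0 := le_antisymm hs.2 hs.1
      rw [this, h0]
    | succ n ih =>
      have ha : min ((n:ℝ) * δ) T ∈ Set.Icc (0:ℝ) T :=
        ⟨le_min (by positivity) hT.le, min_le_right _ _⟩
      have hb : min (((n:ℝ)+1) * δ) T ∈ Set.Icc (min ((n:ℝ) * δ) T) T := by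
        constructor
        · apply le_min_iff.2
          constructor
          · exact (min_le_left _ _).trans (by nlinarith)
          · exact min_le_right _ _
        · exact min_le_right _ _
      have hcδ : min (((n:ℝ)+1) * δ) T - min ((n:ℝ) * δ) T ≤ δ := by
        rcases le_total (((n:ℝ)+1) * δ) T with h | h
        · rw [min_eq_left h, min_eq_left (by nlinarith)]
          ring_nf; nlinarith
        · rw [min_eq_right h]
          have : min ((n:ℝ) * δ) T ≥ T - δ := by
            rcases le_total ((n:ℝ) * δ) T with h' | h'
            · rw [min_eq_left h']; nlinarith
            · rw [min_eq_right h']; linarith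
          linarith
      have hsmall := hstep _ (by
          have := hb.1
          linarith [sub_nonneg.2 hb.1]) hcδ
      have key' := key _ ha _ hb hsmall ih
      simpa [Nat.cast_succ] using key'
  obtain ⟨n, hn⟩ := exists_nat_ge (T / δ)
  have hnT : T ≤ (n:ℝ) * δ := by
    rw [div_le_iff₀ hδ] at hn; linarith
  intro t ht
  exact main n t (by rw [min_eq_right hnT]; exact ht)
end
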